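/- arXiv:2304.03775 — 9 statements merged into one kernel-verified Lean document; each statement's English description precedes it below -/
import Mathlib

section
/- Let S be a countably infinite discrete set and k a kernel on S with k(X,X) = 1 and k(X,·) vanishing at infinity for all X. If k has discrete masses (δ_X ∈ H_k for all X), then the MMD metrizes convergence: for any probability distributions μ, ν_1, ν_2, … on S, if MMD_k(μ, ν_n) → 0 then ν_n(X) → μ(X) for every X ∈ S. In particular, |μ(X) − ν_n(X)| ≤ ‖δ_X‖_k · MMD_k(μ, ν_n). -/
open scoped RealInnerProductSpace Classical

/-!
Pairing the discrete mass `δ_X` with a kernel mean embedding `Σ_Y w(Y) φ(Y)` picks out the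
single coefficient `w(X)`, since `⟪δ_X, φ Y⟫` is the indicator of `Y = X`. Hence
`μ(X) − ν_n(X) = ⟪δ_X, m_μ − m_{ν_n}⟫`, and Cauchy–Schwarz bounds it by `‖δ_X‖ · MMD(μ, ν_n)`.
The embeddings exist because `k(X,X) = 1` makes every `φ X` a unit vector and a real series
with sum `1` is summable, hence absolutely summable.
-/

theorem summable_smul_of_norm_le_one {S E : Type*} [NormedAddCommGroup E] [NormedSpace ℝ E]
    [CompleteSpace E] {w : S → ℝ} {φ : S → E} (hw : Summable w) (hφ : ∀ X, ‖φ X‖ ≤ 1) :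
    Summable fun X => w X • φ X :=
  hw.abs.of_norm_bounded fun X => by
    rw [norm_smul, Real.norm_eq_abs]
    exact mul_le_of_le_one_right (abs_nonneg _) (hφ X)

section Inner

variable {S H : Type*} [NormedAddCommGroup H] [InnerProductSpace ℝ H]
  {φ : S → H} {X : S} {d : H}

theorem inner_tsum_smul_eq_of_inner_eq_ite (hd : ∀ Y, ⟪d, φ Y⟫ = if Y = X then 1 else 0)
    {w : S → ℝ} (hw : Summable fun Y => w Y • φ Y) :
    ⟪d, ∑' Y, w Y • φ Y⟫ = w X := by
  have hterm : ∀ Y, ⟪d, w Y • φ Y⟫ = if Y = X then w X else 0 := by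
    intro Y
    rw [real_inner_smul_right, hd Y]
    split_ifs with hY
    · rw [hY, mul_one]
    · rw [mul_zero]
  have hmap := (innerSL ℝ d).map_tsum hw
  simp only [innerSL_apply_apply] at hmap
  rw [hmap, tsum_congr hterm, tsum_ite_eq]

theorem abs_sub_le_norm_mul_norm_tsum_sub (hd : ∀ Y, ⟪d, φ Y⟫ = if Y = X then 1 else 0)
    {w v : S → ℝ} (hw : Summable fun Y => w Y • φ Y) (hv : Summable fun Y => v Y • φ Y) :
    |w X - v X| ≤ ‖d‖ * ‖(∑' Y, w Y • φ Y) - ∑' Y, v Y • φ Y‖ := by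
  calc |w X - v X| = |⟪d, (∑' Y, w Y • φ Y) - ∑' Y, v Y • φ Y⟫| := by
        rw [inner_sub_right, inner_tsum_smul_eq_of_inner_eq_ite hd hw,
          inner_tsum_smul_eq_of_inner_eq_ite hd hv]
    _ ≤ ‖d‖ * ‖(∑' Y, w Y • φ Y) - ∑' Y, v Y • φ Y‖ := abs_real_inner_le_norm _ _

end Inner

theorem discrete_masses_metrize_distributions_general
    {S : Type*} (k : S → S → ℝ)
    {H : Type*} [NormedAddCommGroup H] [InnerProductSpace ℝ H] [CompleteSpace H]
    (φ : S → H)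
    (hrepr : ∀ X Y : S, ⟪φ X, φ Y⟫ = k X Y)
    (hnorm : ∀ X, k X X = 1)
    (hmass : ∀ X : S, ∃ d : H, ∀ Y : S, ⟪d, φ Y⟫ = if Y = X then 1 else 0)
    (μ : S → ℝ) (ν : ℕ → S → ℝ)
    (hμ1 : ∑' X, μ X = 1)
    (hν1 : ∀ n, ∑' X, ν n X = 1)
    (hMMD : Filter.Tendsto
      (fun n => ‖(∑' X, μ X • φ X) - ∑' X, ν n X • φ X‖) Filter.atTop (nhds 0)) :
    (∀ X : S, Filter.Tendsto (fun n => ν n X) Filter.atTop (nhds (μ X))) ∧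
    ∀ (X : S) (dX : H), (∀ Y : S, ⟪dX, φ Y⟫ = if Y = X then 1 else 0) →
      ∀ n, |μ X - ν n X| ≤ ‖dX‖ * ‖(∑' X, μ X • φ X) - ∑' X, ν n X • φ X‖ := by
  have hφ : ∀ X, ‖φ X‖ ≤ 1 := fun X => by
    have hsq : ‖φ X‖ ^ 2 = 1 := by rw [← real_inner_self_eq_norm_sq, hrepr, hnorm]
    nlinarith [norm_nonneg (φ X)]
  have hembed : ∀ w : S → ℝ, ∑' X, w X = 1 → Summable fun X => w X • φ X := by
    intro w hw1
    refine summable_smul_of_norm_le_one ?_ hφ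
    by_contra hw
    simp [tsum_eq_zero_of_not_summable hw] at hw1
  have hbound : ∀ (X : S) (dX : H), (∀ Y : S, ⟪dX, φ Y⟫ = if Y = X then 1 else 0) →
      ∀ n, |μ X - ν n X| ≤ ‖dX‖ * ‖(∑' X, μ X • φ X) - ∑' X, ν n X • φ X‖ :=
    fun X dX hd n => abs_sub_le_norm_mul_norm_tsum_sub hd (hembed μ hμ1) (hembed (ν n) (hν1 n))
  refine ⟨fun X => ?_, hbound⟩
  obtain ⟨dX, hd⟩ := hmass X
  rw [tendsto_iff_norm_sub_tendsto_zero]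
  refine squeeze_zero (fun n => norm_nonneg _) (fun n => ?_) (by simpa using hMMD.const_mul ‖dX‖)
  rw [Real.norm_eq_abs, abs_sub_comm]
  exact hbound X dX hd n

/-- **Kernels with discrete masses metrize the space of distributions.**
Let `k` be a kernel on a countably infinite set `S` with `k(X,X) = 1` and each section
`k(X,·)` vanishing at infinity, represented by a Hilbert space `H` and feature map `φ`
(`k X Y = ⟪φ X, φ Y⟫`, dense span), and suppose `k` has discrete masses.  If `μ` and
`ν_n` are probability distributions on `S` and `MMD_k(μ, ν_n) → 0` (the norm of the
difference of kernel mean embeddings tends to zero), then `ν_n(X) → μ(X)` for every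
`X`; moreover `|μ(X) − ν_n(X)| ≤ ‖δ_X‖_k · MMD_k(μ, ν_n)`. -/
theorem discrete_masses_metrize_distributions
    {S : Type*} [Countable S] [Infinite S] (k : S → S → ℝ)
    {H : Type*} [NormedAddCommGroup H] [InnerProductSpace ℝ H] [CompleteSpace H]
    (φ : S → H)
    (hrepr : ∀ X Y : S, ⟪φ X, φ Y⟫ = k X Y)
    (hdense : Dense (Submodule.span ℝ (Set.range φ) : Set H))
    (hnorm : ∀ X, k X X = 1)
    (hvanish : ∀ X, Filter.Tendsto (fun Y => k X Y) Filter.cofinite (nhds 0))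
    (hmass : ∀ X : S, ∃ d : H, ∀ Y : S, ⟪d, φ Y⟫ = if Y = X then 1 else 0)
    (μ : S → ℝ) (ν : ℕ → S → ℝ)
    (hμ0 : ∀ X, 0 ≤ μ X) (hμ1 : ∑' X, μ X = 1)
    (hν0 : ∀ n X, 0 ≤ ν n X) (hν1 : ∀ n, ∑' X, ν n X = 1)
    (hMMD : Filter.Tendsto
      (fun n => ‖(∑' X, μ X • φ X) - ∑' X, ν n X • φ X‖) Filter.atTop (nhds 0)) :
    (∀ X : S, Filter.Tendsto (fun n => ν n X) Filter.atTop (nhds (μ X))) ∧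
    ∀ (X : S) (dX : H), (∀ Y : S, ⟪dX, φ Y⟫ = if Y = X then 1 else 0) →
      ∀ n, |μ X - ν n X| ≤ ‖dX‖ * ‖(∑' X, μ X • φ X) - ∑' X, ν n X • φ X‖ :=
  discrete_masses_metrize_distributions_general k φ hrepr hnorm hmass μ ν hμ1 hν1 hMMD
end

section
/- Let S be a countable set partitioned into disjoint subsets {W_V}_V with S = ∪_V W_V, and let k be a kernel on S such that k(X, X') = 0 whenever X ∈ W_V and X' ∈ W_{V'} with V ≠ V'. If for each V the restriction of k to W_V × W_V has discrete masses (δ_X lies in the RKHS of k restricted to W_V for every X ∈ W_V), then k has discrete masses on all of S. Conversely, if k has discrete masses on S, then each restriction of k to a subset W ⊆ S has discrete masses on W. -/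
open scoped RealInnerProductSpace Classical

/-!
For (i): a vector orthogonal to a set is orthogonal to the closed span of that set, so a
δ-function of the block `W V`, taken in the closed span of `φ '' W V`, is automatically
orthogonal to `φ Y` for every `Y` in another block, and hence is a δ-function on all of `S`.
For (ii): the orthogonal projection onto the closed span of `φ '' W` is self-adjoint and fixes
each `φ Y`, `Y ∈ W`, so it carries a global δ-function to one of the restricted kernel.
-/

section

variable {𝕜 E : Type*} [RCLike 𝕜] [NormedAddCommGroup E] [InnerProductSpace 𝕜 E]

theorem inner_eq_zero_of_mem_topologicalClosure_span {s : Set E} {v d : E}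
    (hv : ∀ x ∈ s, inner 𝕜 x v = 0) (hd : d ∈ (Submodule.span 𝕜 s).topologicalClosure) :
    inner 𝕜 d v = 0 := by
  have hortho : Submodule.span 𝕜 s ⟂ Submodule.span 𝕜 {v} :=
    Submodule.isOrtho_span.mpr fun x hx w hw => (Set.mem_singleton_iff.mp hw) ▸ hv x hx
  exact (Submodule.orthogonal_closure' _ v).mp
    (fun y hy => hortho.inner_eq hy (Submodule.mem_span_singleton_self v)) d hd

theorem Submodule.exists_mem_inner_eq (K : Submodule 𝕜 E) [K.HasOrthogonalProjection] (d : E) :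
    ∃ d' ∈ K, ∀ y ∈ K, inner 𝕜 d' y = inner 𝕜 d y :=
  ⟨K.starProjection d, K.starProjection_apply_mem d, fun y hy => by
    rw [K.inner_starProjection_left_eq_right, K.starProjection_eq_self_iff.mpr hy]⟩

end

theorem change_of_domain_discrete_masses_general
    {S : Type*} {ι : Type*} (W : ι → Set S)
    (hdisj : Pairwise (Function.onFun Disjoint W))
    (hcover : (⋃ V, W V) = Set.univ)
    (k : S → S → ℝ)
    {H : Type*} [NormedAddCommGroup H] [InnerProductSpace ℝ H] [CompleteSpace H]
    (φ : S → H)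
    (hrepr : ∀ X Y : S, ⟪φ X, φ Y⟫ = k X Y)
    (horth : ∀ V V' : ι, V ≠ V' → ∀ X ∈ W V, ∀ X' ∈ W V', k X X' = 0) :
    ((∀ V : ι, ∀ X ∈ W V,
        ∃ d ∈ (Submodule.span ℝ (φ '' W V)).topologicalClosure,
          ∀ Y ∈ W V, ⟪d, φ Y⟫ = if Y = X then 1 else 0) →
      ∀ X : S, ∃ d : H, ∀ Y : S, ⟪d, φ Y⟫ = if Y = X then 1 else 0) ∧
    ((∀ X : S, ∃ d : H, ∀ Y : S, ⟪d, φ Y⟫ = if Y = X then 1 else 0) →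
      ∀ (Ws : Set S), ∀ X ∈ Ws,
        ∃ d ∈ (Submodule.span ℝ (φ '' Ws)).topologicalClosure,
          ∀ Y ∈ Ws, ⟪d, φ Y⟫ = if Y = X then 1 else 0) := by
  refine ⟨fun hblock X => ?_, fun hdelta Ws X _ => ?_⟩
  · obtain ⟨V, hXV⟩ := Set.iUnion_eq_univ_iff.mp hcover X
    obtain ⟨d, hd, hdV⟩ := hblock V X hXV
    refine ⟨d, fun Y => ?_⟩
    obtain ⟨V', hYV'⟩ := Set.iUnion_eq_univ_iff.mp hcover Y
    rcases eq_or_ne V' V with rfl | hne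
    · exact hdV Y hYV'
    · have hYX : Y ≠ X := fun hYX => Set.disjoint_left.mp (hdisj hne) hYV' (hYX ▸ hXV)
      rw [if_neg hYX]
      refine inner_eq_zero_of_mem_topologicalClosure_span ?_ hd
      rintro _ ⟨Z, hZ, rfl⟩
      rw [real_inner_comm, hrepr]
      exact horth V' V hne Y hYV' Z hZ
  · obtain ⟨d, hd⟩ := hdelta X
    obtain ⟨d', hd'K, hd'⟩ := (Submodule.span ℝ (φ '' Ws)).topologicalClosure.exists_mem_inner_eq d
    exact ⟨d', hd'K, fun Y hY => (hd' (φ Y) (Submodule.le_topologicalClosure _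
      (Submodule.subset_span ⟨Y, hY, rfl⟩))).trans (hd Y)⟩

/-- **Changing domains preserves discrete masses.**
Let `S` be countable, partitioned into disjoint sets `W V` covering `S`, and let `k` be
a kernel (with RKHS representation `(H, φ)`, dense span) such that `k X X' = 0`
whenever `X` and `X'` lie in different parts.  The RKHS of the restriction of `k` to a
subset `W ⊆ S` is identified with the closed span of `{k(Y,·) : Y ∈ W}` in `H`, so the
restriction has discrete masses at `X ∈ W` iff there is `d` in that closed span with
`⟪d, φ Y⟫ = δ_X(Y)` for all `Y ∈ W`.  Then: (i) if each restriction `k|_{W V}` has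
discrete masses, `k` has discrete masses on `S`; and (ii) conversely, if `k` has
discrete masses on `S`, then every restriction `k|_W` has discrete masses on `W`. -/
theorem change_of_domain_discrete_masses
    {S : Type*} [Countable S] {ι : Type*} (W : ι → Set S)
    (hdisj : Pairwise (Function.onFun Disjoint W))
    (hcover : (⋃ V, W V) = Set.univ)
    (k : S → S → ℝ)
    {H : Type*} [NormedAddCommGroup H] [InnerProductSpace ℝ H] [CompleteSpace H]
    (φ : S → H)
    (hrepr : ∀ X Y : S, ⟪φ X, φ Y⟫ = k X Y)
    (hdense : Dense (Submodule.span ℝ (Set.range φ) : Set H))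
    (horth : ∀ V V' : ι, V ≠ V' → ∀ X ∈ W V, ∀ X' ∈ W V', k X X' = 0) :
    ((∀ V : ι, ∀ X ∈ W V,
        ∃ d ∈ (Submodule.span ℝ (φ '' W V)).topologicalClosure,
          ∀ Y ∈ W V, ⟪d, φ Y⟫ = if Y = X then 1 else 0) →
      ∀ X : S, ∃ d : H, ∀ Y : S, ⟪d, φ Y⟫ = if Y = X then 1 else 0) ∧
    ((∀ X : S, ∃ d : H, ∀ Y : S, ⟪d, φ Y⟫ = if Y = X then 1 else 0) →
      ∀ (Ws : Set S), ∀ X ∈ Ws,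
        ∃ d ∈ (Submodule.span ℝ (φ '' Ws)).topologicalClosure,
          ∀ Y ∈ Ws, ⟪d, φ Y⟫ = if Y = X then 1 else 0) :=
  change_of_domain_discrete_masses_general W hdisj hcover k φ hrepr horth
end

section
/- Let 0 < σ < 1 and define the kernel k(m, m') = σ^{max(m, m')} on the natural numbers ℕ. Then k has discrete masses: for every x ∈ ℕ, the indicator function δ_x belongs to the RKHS H_k. Concretely, δ_0 = (σ−1)^{-1}(k(1,·) − k(0,·)), and each δ_x can be written as a finite linear combination of kernel sections by induction. -/
open scoped RealInnerProductSpace Classical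

/-!
For `m ≤ n` the sections `φ (n+1)` and `φ n` pair with `φ m` to `σ ^ (n+1)` and `σ ^ n`, while
for `m > n` both pair to `σ ^ m`. Hence the normalised difference `(σ ^ n (σ - 1))⁻¹ (φ (n+1) - φ n)`
represents the indicator of `{0, …, n}`, and `δ_x` is the difference of two consecutive such steps.
-/

open Submodule

section MaxPowerKernel

variable {E : Type*} [NormedAddCommGroup E] [InnerProductSpace ℝ E] {σ : ℝ} {φ : ℕ → E}

theorem inner_sub_succ_of_inner_eq_pow_max (hrepr : ∀ m m' : ℕ, ⟪φ m, φ m'⟫ = σ ^ max m m')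
    (n m : ℕ) : ⟪φ (n + 1) - φ n, φ m⟫ = if m ≤ n then σ ^ n * (σ - 1) else 0 := by
  rw [inner_sub_left, hrepr, hrepr]
  split_ifs with h
  · rw [max_eq_left (by omega), max_eq_left h, pow_succ]
    ring
  · rw [max_eq_right (by omega), max_eq_right (by omega), sub_self]

noncomputable def maxPowerStep (σ : ℝ) (φ : ℕ → E) (n : ℕ) : E :=
  (σ ^ n * (σ - 1))⁻¹ • (φ (n + 1) - φ n)

noncomputable def maxPowerDelta (σ : ℝ) (φ : ℕ → E) : ℕ → E
  | 0 => maxPowerStep σ φ 0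
  | n + 1 => maxPowerStep σ φ (n + 1) - maxPowerStep σ φ n

theorem maxPowerStep_mem_span (n : ℕ) : maxPowerStep σ φ n ∈ span ℝ (Set.range φ) :=
  smul_mem _ _ (sub_mem (subset_span ⟨n + 1, rfl⟩) (subset_span ⟨n, rfl⟩))

theorem maxPowerDelta_mem_span (x : ℕ) : maxPowerDelta σ φ x ∈ span ℝ (Set.range φ) := by
  cases x with
  | zero => exact maxPowerStep_mem_span 0
  | succ n => exact sub_mem (maxPowerStep_mem_span (n + 1)) (maxPowerStep_mem_span n)

theorem inner_maxPowerStep (hσ0 : σ ≠ 0) (hσ1 : σ ≠ 1)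
    (hrepr : ∀ m m' : ℕ, ⟪φ m, φ m'⟫ = σ ^ max m m') (n m : ℕ) :
    ⟪maxPowerStep σ φ n, φ m⟫ = if m ≤ n then 1 else 0 := by
  rw [maxPowerStep, real_inner_smul_left, inner_sub_succ_of_inner_eq_pow_max hrepr]
  split_ifs
  · exact inv_mul_cancel₀ (mul_ne_zero (pow_ne_zero n hσ0) (sub_ne_zero.mpr hσ1))
  · exact mul_zero _

theorem inner_maxPowerDelta (hσ0 : σ ≠ 0) (hσ1 : σ ≠ 1)
    (hrepr : ∀ m m' : ℕ, ⟪φ m, φ m'⟫ = σ ^ max m m') (x m : ℕ) :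
    ⟪maxPowerDelta σ φ x, φ m⟫ = if m = x then 1 else 0 := by
  cases x with
  | zero => simp only [maxPowerDelta, inner_maxPowerStep hσ0 hσ1 hrepr, Nat.le_zero]
  | succ n =>
    rw [maxPowerDelta, inner_sub_left, inner_maxPowerStep hσ0 hσ1 hrepr,
      inner_maxPowerStep hσ0 hσ1 hrepr]
    split_ifs <;> first | omega | norm_num

end MaxPowerKernel

theorem max_power_kernel_has_discrete_masses_general
    (σ : ℝ) (hσ0 : 0 < σ) (hσ1 : σ < 1)
    {H : Type*} [NormedAddCommGroup H] [InnerProductSpace ℝ H]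
    (φ : ℕ → H)
    (hrepr : ∀ m m' : ℕ, ⟪φ m, φ m'⟫ = σ ^ (max m m')) :
    (∀ m : ℕ, ⟪(σ - 1)⁻¹ • (φ 1 - φ 0), φ m⟫ = if m = 0 then 1 else 0) ∧
    ∀ x : ℕ, ∃ d ∈ Submodule.span ℝ (Set.range φ),
      ∀ m : ℕ, ⟪d, φ m⟫ = if m = x then 1 else 0 := by
  have hdelta := inner_maxPowerDelta hσ0.ne' hσ1.ne hrepr
  refine ⟨fun m => ?_, fun x => ⟨maxPowerDelta σ φ x, maxPowerDelta_mem_span x, hdelta x⟩⟩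
  simpa [maxPowerDelta, maxPowerStep] using hdelta 0 m

/-- **The kernel `k(m,m') = σ^{max(m,m')}` on ℕ has discrete masses (`0 < σ < 1`).**
With an RKHS representation `(H, φ)` (so `⟪φ m, φ m'⟫ = σ^{max(m,m')}`, dense span):
the element `(σ−1)⁻¹ • (φ 1 − φ 0)` represents the delta function `δ_0`, and for every
`x ∈ ℕ` the delta function `δ_x` is represented by a finite linear combination of
kernel sections, i.e. an element of the (algebraic) span of `{φ m}`. -/
theorem max_power_kernel_has_discrete_masses
    (σ : ℝ) (hσ0 : 0 < σ) (hσ1 : σ < 1)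
    {H : Type*} [NormedAddCommGroup H] [InnerProductSpace ℝ H] [CompleteSpace H]
    (φ : ℕ → H)
    (hrepr : ∀ m m' : ℕ, ⟪φ m, φ m'⟫ = σ ^ (max m m'))
    (hdense : Dense (Submodule.span ℝ (Set.range φ) : Set H)) :
    (∀ m : ℕ, ⟪(σ - 1)⁻¹ • (φ 1 - φ 0), φ m⟫ = if m = 0 then 1 else 0) ∧
    ∀ x : ℕ, ∃ d ∈ Submodule.span ℝ (Set.range φ),
      ∀ m : ℕ, ⟪d, φ m⟫ = if m = x then 1 else 0 :=
  max_power_kernel_has_discrete_masses_general σ hσ0 hσ1 φ hrepr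
end

section
/- Let 𝓑 be a finite alphabet, S the set of all finite strings over 𝓑, and fix L ≥ 1 and a string length of L+1. Let Φ be the weighted degree (Hamming) featurization of lag L: Φ_{l,V}(X) = 1 if the L-mer of X starting at position l equals V ∈ 𝓑^L, else 0. Let A_1 = 𝓑^{L+1} (all strings of length L+1) and A_2 = {X + X_{(0)} : X ∈ 𝓑^L} (length-(L+1) strings ending with their first letter). Then the averaged feature vectors agree: (1/|A_1|) Σ_{X∈A_1} Φ_{l,V}(X) = |𝓑|^{-L} = (1/|A_2|) Σ_{X∈A_2} Φ_{l,V}(X) for every position l ∈ {0,1} and every V ∈ 𝓑^L. Consequently, for the kernel k(X,Y) = ⟨Φ(X), Φ(Y)⟩, every f in span{k(Y,·) : Y ∈ S} satisfies (1/|A_1|) Σ_{X∈A_1} f(X) = (1/|A_2|) Σ_{X∈A_2} f(X). -/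
open scoped Classical

/-- The positional `L`-mer feature of lag `L`: `Φ_{l,V}(X) = 1` iff the `L`-mer of `X`
starting at (0-indexed) position `l` equals `V`. -/
noncomputable def PhiWD {B : Type*} [DecidableEq B] (L l : ℕ) (V : Fin L → B)
    (X : List B) : ℝ :=
  if ∀ i : Fin L, X[l + (i : ℕ)]? = some (V i) then 1 else 0

/-- The weighted degree (Hamming) kernel of lag `L`:
`k_H(X,Y) = ∑_{l,V} Φ_{l,V}(X) Φ_{l,V}(Y)`. -/
noncomputable def kWD {B : Type*} [Fintype B] [DecidableEq B] (L : ℕ)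
    (X Y : List B) : ℝ :=
  ∑ l ∈ Finset.range (max X.length Y.length), ∑ V : Fin L → B,
    PhiWD L l V X * PhiWD L l V Y
open Finset

/-!
On a word `t` of length `L + 1` the window read by `PhiWD L l V` for `l ∈ {0, 1}` is
`t ∘ p.succAbove` with `p = last` or `p = 0`: one letter stays free, so exactly `|𝓑|` words
have window `V`. On a cyclic word `ofFn t ++ [t 0]` the window is `t ∘ σ` with `σ` the
identity or the rotation `finRotate L`, a bijection, so exactly one word does. For `l ≥ 2` the
window does not fit into a word of length `L + 1`. Both averages are linear functionals, and
a kernel section `kWD L Y`, restricted to words of length `L + 1`, is a finite linear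
combination of features, so the two averages agree on the span of the kernel sections.
-/

section Counting

variable {α R : Type*} [Fintype α] [DecidableEq α] [AddCommMonoidWithOne R]

theorem sum_ite_comp_equiv_eq_one {ι : Type*} [Fintype ι] [DecidableEq ι] (σ : ι ≃ ι)
    (V : ι → α) : ∑ t : ι → α, (if t ∘ σ = V then 1 else 0 : R) = 1 := by
  have hfiber : ∀ t : ι → α, t ∘ σ = V ↔ t = V ∘ σ.symm := fun t =>
    ⟨fun h => by simp [← h, Function.comp_assoc], fun h => by simp [h, Function.comp_assoc]⟩
  simp only [hfiber, Fintype.sum_ite_eq']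

theorem sum_ite_comp_succAbove_eq_card {n : ℕ} (p : Fin (n + 1)) (V : Fin n → α) :
    ∑ t : Fin (n + 1) → α, (if t ∘ p.succAbove = V then 1 else 0 : R) = Fintype.card α := by
  rw [Fintype.sum_equiv (Fin.insertNthEquiv (fun _ => α) p).symm
    (fun t => if t ∘ p.succAbove = V then 1 else 0) (fun x => if x.2 = V then 1 else 0)
    fun _ => rfl, Fintype.sum_prod_type]
  simp only [Fintype.sum_ite_eq', sum_const, card_univ, nsmul_one]

end Counting

section Words

variable {B : Type*}

noncomputable def scaledSum {ι : Type*} [Fintype ι] (c : ℝ) (A : ι → List B) :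
    (List B → ℝ) →ₗ[ℝ] ℝ where
  toFun f := c * ∑ i, f (A i)
  map_add' f g := by simp only [Pi.add_apply, sum_add_distrib, mul_add]
  map_smul' a f := by simp only [Pi.smul_apply, smul_eq_mul, ← mul_sum, RingHom.id_apply]; ring

@[simp]
theorem scaledSum_apply {ι : Type*} [Fintype ι] (c : ℝ) (A : ι → List B) (f : List B → ℝ) :
    scaledSum c A f = c * ∑ i, f (A i) :=
  rfl

theorem getElem?_ofFn_append_head_one_add {L : ℕ} (hL : 1 ≤ L) (t : Fin L → B) (i : Fin L) :
    (List.ofFn t ++ [t ⟨0, hL⟩])[1 + (i : ℕ)]? = some (t (finRotate L i)) := by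
  obtain ⟨m, rfl⟩ := Nat.exists_eq_add_of_le' hL
  by_cases hi : i = Fin.last m
  · subst hi
    rw [List.getElem?_append_right (by simp [add_comm])]
    simp [add_comm]
  · have hlt : 1 + (i : ℕ) < m + 1 := by simpa [add_comm] using Fin.val_lt_last hi
    rw [List.getElem?_append_left (by simpa using hlt), List.getElem?_ofFn, dif_pos hlt]
    congr 2
    exact Fin.ext ((coe_finRotate_of_ne_last hi).trans (add_comm _ _)).symm

end Words

section Features

variable {B : Type*} [DecidableEq B]

theorem PhiWD_eq_ite_of_getElem? {L l : ℕ} {V w : Fin L → B} {X : List B}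
    (hw : ∀ i : Fin L, X[l + (i : ℕ)]? = some (w i)) :
    PhiWD L l V X = if w = V then 1 else 0 := by
  simp [PhiWD, hw, funext_iff]

theorem PhiWD_eq_zero_of_length_lt {L l : ℕ} (hL : 1 ≤ L) (V : Fin L → B) {X : List B}
    (hX : X.length < l + L) : PhiWD L l V X = 0 := by
  rw [PhiWD, if_neg]
  intro h
  simpa [List.getElem?_eq_none (by omega : X.length ≤ l + (L - 1))] using h ⟨L - 1, by omega⟩

variable [Fintype B]

theorem sum_PhiWD_ofFn {L l : ℕ} (hl : l ≤ 1) (V : Fin L → B) :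
    ∑ t : Fin (L + 1) → B, PhiWD L l V (List.ofFn t) = Fintype.card B := by
  obtain ⟨p, hp⟩ : ∃ p : Fin (L + 1), ∀ i : Fin L, (p.succAbove i : ℕ) = l + i := by
    interval_cases l
    · exact ⟨Fin.last L, fun i => by simp⟩
    · exact ⟨0, fun i => by simp [add_comm]⟩
  have hwindow : ∀ (t : Fin (L + 1) → B) (i : Fin L),
      (List.ofFn t)[l + (i : ℕ)]? = some ((t ∘ p.succAbove) i) := fun t i => by
    rw [← hp i, List.getElem?_ofFn, dif_pos (p.succAbove i).isLt]
    rfl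
  simp only [PhiWD_eq_ite_of_getElem? (hwindow _), sum_ite_comp_succAbove_eq_card]

theorem sum_PhiWD_ofFn_append_head {L l : ℕ} (hL : 1 ≤ L) (hl : l ≤ 1) (V : Fin L → B) :
    ∑ t : Fin L → B, PhiWD L l V (List.ofFn t ++ [t ⟨0, hL⟩]) = 1 := by
  obtain ⟨σ, hσ⟩ : ∃ σ : Fin L ≃ Fin L, ∀ (t : Fin L → B) (i : Fin L),
      (List.ofFn t ++ [t ⟨0, hL⟩])[l + (i : ℕ)]? = some ((t ∘ σ) i) := by
    interval_cases l
    · exact ⟨Equiv.refl _, fun t i => by simp⟩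
    · exact ⟨finRotate L, getElem?_ofFn_append_head_one_add hL⟩
  simp only [PhiWD_eq_ite_of_getElem? (hσ _), sum_ite_comp_equiv_eq_one]

end Features

section KernelSections

variable {B ι κ : Type*} [DecidableEq B] [Fintype ι] [Fintype κ] {n : ℕ}

theorem scaledSum_PhiWD_eq_zero {L l : ℕ} (hL : 1 ≤ L) (c : ℝ) {A : ι → List B}
    (hA : ∀ i, (A i).length = n) (hn : n < l + L) (V : Fin L → B) :
    scaledSum c A (PhiWD L l V) = 0 := by
  simp [PhiWD_eq_zero_of_length_lt hL V (hA _ ▸ hn)]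

variable [Fintype B]

theorem scaledSum_kWD (L : ℕ) (c : ℝ) {A : ι → List B} (hA : ∀ i, (A i).length = n)
    (Y : List B) :
    scaledSum c A (kWD L Y) = ∑ l ∈ range (max Y.length n), ∑ V : Fin L → B,
      PhiWD L l V Y * scaledSum c A (PhiWD L l V) := by
  simp only [scaledSum_apply, kWD, hA, mul_sum]
  rw [sum_comm]
  refine sum_congr rfl fun l _ => ?_
  rw [sum_comm]
  refine sum_congr rfl fun V _ => sum_congr rfl fun i _ => by ring

theorem eqOn_span_kWD (L : ℕ) {c d : ℝ} {A : ι → List B} {A' : κ → List B}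
    (hA : ∀ i, (A i).length = n) (hA' : ∀ j, (A' j).length = n)
    (hPhi : ∀ l (V : Fin L → B), scaledSum c A (PhiWD L l V) = scaledSum d A' (PhiWD L l V)) :
    Set.EqOn (scaledSum c A) (scaledSum d A')
      (Submodule.span ℝ (Set.range fun Y : List B => fun X : List B => kWD L Y X)) := by
  refine LinearMap.eqOn_span' ?_
  rintro _ ⟨Y, rfl⟩
  simp only [scaledSum_kWD L _ hA, scaledSum_kWD L _ hA', hPhi]

theorem scaledSum_ofFn_PhiWD [Nonempty B] {L l : ℕ} (hl : l ≤ 1) (V : Fin L → B) :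
    scaledSum ((Fintype.card B : ℝ) ^ (L + 1))⁻¹ (List.ofFn (n := L + 1)) (PhiWD L l V) =
      ((Fintype.card B : ℝ) ^ L)⁻¹ := by
  rw [scaledSum_apply, sum_PhiWD_ofFn hl, pow_succ, mul_inv,
    inv_mul_cancel_right₀ (by positivity)]

theorem scaledSum_ofFn_append_head_PhiWD {L l : ℕ} (hL : 1 ≤ L) (hl : l ≤ 1) (V : Fin L → B)
    (c : ℝ) :
    scaledSum c (fun t : Fin L → B => List.ofFn t ++ [t ⟨0, hL⟩]) (PhiWD L l V) = c := by
  rw [scaledSum_apply, sum_PhiWD_ofFn_append_head hL hl, mul_one]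

end KernelSections

/-- **Degeneracy of the weighted degree kernel of lag `L`.**
Let `A₁ = 𝓑^{L+1}` (all strings of length `L+1`, encoded as `List.ofFn t` for
`t : Fin (L+1) → 𝓑`) and `A₂ = {X ++ [X₀] : X ∈ 𝓑^L}` (length-`(L+1)` strings ending
with their first letter).  Then for every position `l ∈ {0,1}` and every `L`-mer `V`,
the averaged features agree: both averages equal `|𝓑|^{-L}`.  Consequently, every `f`
in the span of the kernel sections of the weighted degree kernel has the same average
over `A₁` as over `A₂`. -/
theorem weighted_degree_kernel_degenerate
    {B : Type*} [Fintype B] [DecidableEq B] (hB : 2 ≤ Fintype.card B)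
    (L : ℕ) (hL : 1 ≤ L) :
    (∀ l : ℕ, l ≤ 1 → ∀ V : Fin L → B,
      ((Fintype.card B : ℝ) ^ (L + 1))⁻¹ *
          ∑ t : Fin (L + 1) → B, PhiWD L l V (List.ofFn t)
        = ((Fintype.card B : ℝ) ^ L)⁻¹ ∧
      ((Fintype.card B : ℝ) ^ L)⁻¹ *
          ∑ t : Fin L → B, PhiWD L l V (List.ofFn t ++ [t ⟨0, hL⟩])
        = ((Fintype.card B : ℝ) ^ L)⁻¹) ∧
    ∀ f ∈ Submodule.span ℝ
        (Set.range fun Y : List B => fun X : List B => kWD L Y X),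
      ((Fintype.card B : ℝ) ^ (L + 1))⁻¹ * ∑ t : Fin (L + 1) → B, f (List.ofFn t)
        = ((Fintype.card B : ℝ) ^ L)⁻¹ *
            ∑ t : Fin L → B, f (List.ofFn t ++ [t ⟨0, hL⟩]) := by
  have : Nonempty B := Fintype.card_pos_iff.mp (by omega)
  have hfeature := fun l (hl : l ≤ 1) (V : Fin L → B) => And.intro
    (scaledSum_ofFn_PhiWD hl V)
    (scaledSum_ofFn_append_head_PhiWD hL hl V ((Fintype.card B : ℝ) ^ L)⁻¹)
  refine ⟨hfeature, fun f hf => eqOn_span_kWD L (n := L + 1) (fun _ => List.length_ofFn)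
    (fun _ => by simp) (fun l V => ?_) hf⟩
  rcases le_or_gt l 1 with hl | hl
  · exact (hfeature l hl V).1.trans (hfeature l hl V).2.symm
  · rw [scaledSum_PhiWD_eq_zero hL _ (fun _ => List.length_ofFn) (by omega),
      scaledSum_PhiWD_eq_zero hL _ (n := L + 1) (fun _ => by simp) (by omega)]
end

section
/- With notation as in the weighted degree kernel degeneracy: let g : A_1 → ℝ be defined by g(X) = |𝓑| − 1 if X ∈ A_2 and g(X) = −1 if X ∈ A_1 \ A_2. Then for every Y ∈ S, Σ_{X∈A_1} k_H(Y, X) g(X) = 0, where k_H(X,Y) = ⟨Φ(X),Φ(Y)⟩ is the Hamming/weighted degree kernel of lag L. Hence the least-squares kernel regression fit of g over the data set A_1 is the zero function. -/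
open scoped Classical

/-! Expanding `k_H`, the sum becomes `∑_{l,V} Φ_{l,V}(Y) ∑_X Φ_{l,V}(X) g(X)`. A string `X` of
length `L + 1` has no `L`-mer at positions `l ≥ 2`; the `L`-mer at position `0` leaves the last
letter of `X` free and the one at position `1` leaves the first letter free. Since `g(X)` only
compares the first and last letters, summing it over the free letter gives
`(|B| - 1) - (|B| - 1) = 0`. -/

open Finset

theorem exists_ofFn_eq_append_head_iff {B : Type*} {L : ℕ} (hL : 1 ≤ L) (t : Fin (L + 1) → B) :
    (∃ s : Fin L → B, List.ofFn t = List.ofFn s ++ [s ⟨0, hL⟩]) ↔ t (Fin.last L) = t 0 := by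
  rw [List.ofFn_succ', List.concat_eq_append]
  constructor
  · rintro ⟨s, hs⟩
    obtain ⟨hinit, hlast⟩ := List.append_inj' hs rfl
    rw [List.singleton_inj.mp hlast, ← List.ofFn_injective hinit]
    rfl
  · exact fun h => ⟨Fin.init t, by rw [h]; rfl⟩

section

variable {B : Type*} [DecidableEq B]

theorem PhiWD_ofFn {L l n : ℕ} (V : Fin L → B) (t : Fin n → B) (h : l + L ≤ n) :
    PhiWD L l V (List.ofFn t) =
      if (fun i : Fin L => t ⟨l + i, by omega⟩) = V then 1 else 0 := by
  simp only [PhiWD, funext_iff]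
  congr 1
  refine propext (forall_congr' fun i => ?_)
  rw [List.getElem?_ofFn, dif_pos (by omega)]
  exact Option.some_inj

end

section

variable {B : Type*} [Fintype B] [DecidableEq B]

noncomputable def centeredIndicator (a b : B) : ℝ :=
  if a = b then (Fintype.card B : ℝ) - 1 else -1

theorem centeredIndicator_comm (a b : B) : centeredIndicator a b = centeredIndicator b a := by
  simp only [centeredIndicator, eq_comm]

theorem sum_centeredIndicator_left (b : B) : ∑ a, centeredIndicator a b = 0 := by
  have hcard : 1 ≤ Fintype.card B := Fintype.card_pos_iff.mpr ⟨b⟩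
  simp [centeredIndicator, sum_ite, filter_eq', filter_ne', hcard]

theorem sum_mul_centeredIndicator_eq_zero {n : ℕ} {j k : Fin (n + 1)} (hkj : k ≠ j)
    (F : (Fin n → B) → ℝ) :
    ∑ t : Fin (n + 1) → B, F (j.removeNth t) * centeredIndicator (t j) (t k) = 0 := by
  obtain ⟨k', rfl⟩ := Fin.exists_succAbove_eq hkj
  rw [← (Fin.insertNthEquiv (fun _ => B) j).sum_comp, Fintype.sum_prod_type_right]
  refine sum_eq_zero fun s _ => ?_
  simp only [Fin.insertNthEquiv, Equiv.coe_fn_mk, Fin.removeNth_insertNth, Fin.insertNth_apply_same,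
    Fin.insertNth_apply_succAbove, ← mul_sum, sum_centeredIndicator_left, mul_zero]

theorem sum_PhiWD_ofFn_mul_centeredIndicator {L : ℕ} (hL : 1 ≤ L) (l : ℕ) (V : Fin L → B) :
    ∑ t : Fin (L + 1) → B,
      PhiWD L l V (List.ofFn t) * centeredIndicator (t (Fin.last L)) (t 0) = 0 := by
  have hlast : (0 : Fin (L + 1)) ≠ Fin.last L := by rw [Ne, Fin.ext_iff]; simp; omega
  match l with
  | 0 =>
    have hwindow (t : Fin (L + 1) → B) :
        (fun i : Fin L => t ⟨0 + i, by omega⟩) = (Fin.last L).removeNth t := by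
      ext i; simp [Fin.init, Fin.castSucc, Fin.castAdd, Fin.castLE]
    calc _ = ∑ t : Fin (L + 1) → B, (if (Fin.last L).removeNth t = V then 1 else 0) *
            centeredIndicator (t (Fin.last L)) (t 0) :=
          sum_congr rfl fun t _ => by rw [PhiWD_ofFn V t (by omega), hwindow]
      _ = 0 := sum_mul_centeredIndicator_eq_zero hlast fun s => if s = V then 1 else 0
  | 1 =>
    have hwindow (t : Fin (L + 1) → B) :
        (fun i : Fin L => t ⟨1 + i, by omega⟩) = (0 : Fin (L + 1)).removeNth t := by
      ext i; simp [Fin.tail, Fin.succ, Nat.add_comm]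
    calc _ = ∑ t : Fin (L + 1) → B, (if (0 : Fin (L + 1)).removeNth t = V then 1 else 0) *
            centeredIndicator (t 0) (t (Fin.last L)) :=
          sum_congr rfl fun t _ => by rw [PhiWD_ofFn V t (by omega), hwindow, centeredIndicator_comm]
      _ = 0 := sum_mul_centeredIndicator_eq_zero hlast.symm fun s => if s = V then 1 else 0
  | l + 2 =>
    refine sum_eq_zero fun t _ => ?_
    rw [PhiWD_eq_zero_of_length_lt hL V (by simp; omega), zero_mul]

end

theorem weighted_degree_least_squares_zero_general
    {B : Type*} [Fintype B] [DecidableEq B]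
    (L : ℕ) (hL : 1 ≤ L)
    (g : List B → ℝ)
    (hg : ∀ X : List B,
      g X = if ∃ t : Fin L → B, X = List.ofFn t ++ [t ⟨0, hL⟩]
        then (Fintype.card B : ℝ) - 1 else -1) :
    ∀ Y : List B,
      ∑ t : Fin (L + 1) → B, kWD L Y (List.ofFn t) * g (List.ofFn t) = 0 := by
  intro Y
  have hg_ofFn (t : Fin (L + 1) → B) :
      g (List.ofFn t) = centeredIndicator (t (Fin.last L)) (t 0) := by
    rw [hg]
    exact if_congr (exists_ofFn_eq_append_head_iff hL t) rfl rfl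
  simp only [kWD, List.length_ofFn, hg_ofFn, sum_mul]
  rw [sum_comm]
  refine sum_eq_zero fun l _ => ?_
  rw [sum_comm]
  refine sum_eq_zero fun V _ => ?_
  simp only [mul_assoc, ← mul_sum, sum_PhiWD_ofFn_mul_centeredIndicator hL, mul_zero]

/-- **Least-squares failure of the weighted degree kernel.**
Let `A₁ = 𝓑^{L+1}` (strings `List.ofFn t` for `t : Fin (L+1) → 𝓑`) and let
`A₂ ⊆ A₁` consist of the strings ending with their first letter.  Define
`g(X) = |𝓑| − 1` for `X ∈ A₂` and `g(X) = −1` for `X ∈ A₁ \ A₂`.  Then for every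
string `Y`, `∑_{X ∈ A₁} k_H(Y, X) g(X) = 0`; hence the least-squares kernel regression
fit of `g` over `A₁` with the weighted degree kernel is the zero function. -/
theorem weighted_degree_least_squares_zero
    {B : Type*} [Fintype B] [DecidableEq B] (hB : 2 ≤ Fintype.card B)
    (L : ℕ) (hL : 1 ≤ L)
    (g : List B → ℝ)
    (hg : ∀ X : List B,
      g X = if ∃ t : Fin L → B, X = List.ofFn t ++ [t ⟨0, hL⟩]
        then (Fintype.card B : ℝ) - 1 else -1) :
    ∀ Y : List B,
      ∑ t : Fin (L + 1) → B, kWD L Y (List.ofFn t) * g (List.ofFn t) = 0 :=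
  weighted_degree_least_squares_zero_general L hL g hg
end

section
/- Let k_s be a strictly positive definite kernel on the extended alphabet 𝓑 ∪ {$} with k_s($,$) = 1, and define the base position-wise comparison kernel on finite strings (padded with infinite tails of $) by k(X,Y) = Π_{l=0}^∞ k_s(X_{(l)}, Y_{(l)}). Then k is a strictly positive definite kernel on the set S of all finite strings over 𝓑, and k has discrete masses: δ_X ∈ H_k for every X ∈ S. -/
open scoped RealInnerProductSpace Classical

/-- The base position-wise comparison kernel.  Strings over the alphabet `B` are padded
with an infinite tail of stop symbols: the padded letter of `X` at position `l` is
`X[l]? : Option B`, with `none` playing the role of the stop symbol `$`.  The kernel is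
`k(X,Y) = ∏_l k_s(X_{(l)}, Y_{(l)})`; since `k_s($,$) = 1` only finitely many factors
differ from `1`, so the product over `l < max(|X|,|Y|)` computes it. -/
noncomputable def kPW {B : Type*} (ks : Option B → Option B → ℝ)
    (X Y : List B) : ℝ :=
  ∏ l ∈ Finset.range (max X.length Y.length), ks X[l]? Y[l]?

/-!
On strings of length at most `N`, padding with `$` to exactly `N` letters is injective and turns
`kPW ks` into the `N`-fold Kronecker power of the positive definite matrix `ks`, which is positive
definite; so every finite Gram matrix of `kPW ks` is positive definite.

For the discrete mass at `X`, invert the Gram matrix on the strings of length at most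
`N = |X| + 1`: this gives `β` with `∑ β W k(W, Y) = δ_{XY}` for those `Y`. A longer `Y` factors as
`k(W, Y) = k(W, Y.take N) * k([], Y.drop N)`, and `Y.take N ≠ X` since it has length `N`, so the
sum vanishes there as well.
-/

namespace Matrix

variable {n : Type*}

theorem star_dotProduct_mulVec_eq_sum_sum [Fintype n] (M : Matrix n n ℝ) (v : n → ℝ) :
    star v ⬝ᵥ (M *ᵥ v) = ∑ i, ∑ j, v i * v j * M i j := by
  simp only [dotProduct, mulVec, star_trivial, Finset.mul_sum]
  exact Finset.sum_congr rfl fun i _ => Finset.sum_congr rfl fun j _ => by ring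

theorem posDef_of_sum_sum_pos [Fintype n] {M : Matrix n n ℝ} (hM : ∀ i j, M i j = M j i)
    (hpos : ∀ v : n → ℝ, v ≠ 0 → 0 < ∑ i, ∑ j, v i * v j * M i j) : M.PosDef := by
  refine .of_dotProduct_mulVec_pos (IsHermitian.ext fun i j => (hM i j).symm) fun v hv => ?_
  rw [star_dotProduct_mulVec_eq_sum_sum]
  exact hpos v hv

theorem PosDef.sum_sum_pos {M : Matrix n n ℝ} (T : Finset n)
    (hM : (M.submatrix ((↑) : T → n) (↑)).PosDef) (v : n → ℝ) (hv : ∃ i ∈ T, v i ≠ 0) :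
    0 < ∑ i ∈ T, ∑ j ∈ T, v i * v j * M i j := by
  obtain ⟨i, hiT, hi⟩ := hv
  have hne : (fun i : T => v i) ≠ 0 := fun h => hi (congrFun h ⟨i, hiT⟩)
  have := hM.dotProduct_mulVec_pos hne
  rw [star_dotProduct_mulVec_eq_sum_sum] at this
  simpa only [submatrix_apply, ← Finset.sum_coe_sort T] using this

def kroneckerPow {A R : Type*} [CommMonoid R] (K : Matrix A A R) (N : ℕ) :
    Matrix (Fin N → A) (Fin N → A) R :=
  of fun t u => ∏ l, K (t l) (u l)

open scoped Kronecker ComplexOrder in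
theorem PosDef.kroneckerPow {A 𝕜 : Type*} [Finite A] [RCLike 𝕜] {K : Matrix A A 𝕜}
    (hK : K.PosDef) (N : ℕ) : (K.kroneckerPow N).PosDef := by
  classical
  induction N with
  | zero =>
    convert PosDef.one (n := Fin 0 → A) (R := 𝕜)
    ext t u
    rw [Subsingleton.elim t u, one_apply_eq]
    simp [Matrix.kroneckerPow]
  | succ N ih =>
    let e := Fin.consEquiv fun _ : Fin (N + 1) => A
    convert (hK.kronecker ih).submatrix e.symm.injective
    ext t u
    simp [Matrix.kroneckerPow, e, Fin.consEquiv, Fin.prod_univ_succ, Fin.tail]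

end Matrix

section PositionWise

variable {B : Type*} {ks : Option B → Option B → ℝ}

def padTo (N : ℕ) (X : List B) : Fin N → Option B := fun l => X[(l : ℕ)]?

theorem padTo_injOn (N : ℕ) : Set.InjOn (padTo (B := B) N) {X | X.length ≤ N} := by
  intro X hX Y hY h
  refine List.ext_getElem? fun l => ?_
  by_cases hl : l < N
  · exact congrFun h ⟨l, hl⟩
  · rw [List.getElem?_eq_none (le_trans hX (not_lt.mp hl)),
      List.getElem?_eq_none (le_trans hY (not_lt.mp hl))]

theorem kPW_eq_kroneckerPow (hstop : ks none none = 1) {N : ℕ} {X Y : List B}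
    (hX : X.length ≤ N) (hY : Y.length ≤ N) :
    kPW ks X Y = (Matrix.of ks).kroneckerPow N (padTo N X) (padTo N Y) := by
  simp only [Matrix.kroneckerPow, Matrix.of_apply, padTo]
  rw [Fin.prod_univ_eq_prod_range (fun l => ks X[l]? Y[l]?)]
  refine Finset.prod_subset (Finset.range_subset_range.mpr (max_le hX hY)) fun l _ hl => ?_
  rw [Finset.mem_range, not_lt, max_le_iff] at hl
  rw [List.getElem?_eq_none hl.1, List.getElem?_eq_none hl.2, hstop]

theorem kPW_posDef_submatrix [Fintype B] (hks : (Matrix.of ks).PosDef) (hstop : ks none none = 1)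
    (T : Finset (List B)) :
    ((Matrix.of (kPW ks)).submatrix ((↑) : T → List B) (↑)).PosDef := by
  set N := T.sup List.length
  have hlen : ∀ X : T, (X : List B).length ≤ N := fun X => Finset.le_sup X.2
  have hinj : Function.Injective fun X : T => padTo N (X : List B) :=
    fun X Y h => Subtype.ext (padTo_injOn N (hlen X) (hlen Y) h)
  have hsub : (Matrix.of (kPW ks)).submatrix ((↑) : T → List B) (↑) =
      ((Matrix.of ks).kroneckerPow N).submatrix (fun X : T => padTo N (X : List B))
        (fun X : T => padTo N (X : List B)) :=
    Matrix.ext fun X Y => kPW_eq_kroneckerPow hstop (hlen X) (hlen Y)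
  rw [hsub]
  exact (hks.kroneckerPow N).submatrix hinj

theorem kPW_eq_kPW_take_mul {N : ℕ} {W : List B} (hW : W.length ≤ N) (Y : List B) :
    kPW ks W Y = kPW ks W (Y.take N) * kPW ks [] (Y.drop N) := by
  rcases le_or_gt Y.length N with hY | hY
  · simp [List.take_of_length_le hY, List.drop_of_length_le hY, kPW]
  obtain ⟨m, hm⟩ : ∃ m, Y.length = N + m := ⟨Y.length - N, by omega⟩
  have hWY : max W.length Y.length = N + m := by omega
  have hWtake : max W.length (Y.take N).length = N := by rw [List.length_take]; omega
  simp only [kPW, hWY, hWtake, Finset.prod_range_add, List.length_nil, List.length_drop]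
  congr 1
  · refine Finset.prod_congr rfl fun l hl => ?_
    rw [List.getElem?_take_of_lt (Finset.mem_range.mp hl)]
  · rw [hm, Nat.add_sub_cancel_left, Nat.zero_max]
    refine Finset.prod_congr rfl fun l _ => ?_
    rw [List.getElem?_eq_none (by omega), List.getElem?_nil, List.getElem?_drop]

theorem exists_sum_mul_kPW_eq_ite [Fintype B] [DecidableEq B] (hks : (Matrix.of ks).PosDef) (hstop : ks none none = 1)
    (X : List B) :
    ∃ (T : Finset (List B)) (β : T → ℝ),
      ∀ Y : List B, ∑ W : T, β W * kPW ks W Y = if Y = X then 1 else 0 := by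
  set N := X.length + 1
  set T := (List.finite_length_le B N).toFinset
  have hmem : ∀ W : List B, W ∈ T ↔ W.length ≤ N := fun W => Set.Finite.mem_toFinset _
  obtain ⟨β, hβ⟩ := Matrix.vecMul_surjective_iff_isUnit.2
    (kPW_posDef_submatrix hks hstop T).isUnit fun Y : T => if (Y : List B) = X then 1 else 0
  have hβT : ∀ Y ∈ T, ∑ W : T, β W * kPW ks W Y = if Y = X then 1 else 0 :=
    fun Y hY => congrFun hβ ⟨Y, hY⟩
  refine ⟨T, β, fun Y => ?_⟩
  rcases le_or_gt Y.length N with hY | hY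
  · exact hβT Y ((hmem Y).2 hY)
  have hYX : Y ≠ X := by rintro rfl; omega
  have htakeX : Y.take N ≠ X := fun h => by
    have := congrArg List.length h
    simp only [List.length_take] at this
    omega
  calc ∑ W : T, β W * kPW ks W Y
      = (∑ W : T, β W * kPW ks W (Y.take N)) * kPW ks [] (Y.drop N) := by
        rw [Finset.sum_mul]
        refine Finset.sum_congr rfl fun W _ => ?_
        rw [kPW_eq_kPW_take_mul ((hmem W).1 W.2), mul_assoc]
    _ = if Y = X then 1 else 0 := by
        rw [hβT _ ((hmem _).2 (List.length_take_le _ _)), if_neg htakeX, if_neg hYX, zero_mul]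

end PositionWise

theorem position_wise_kernel_spd_and_discrete_masses_general
    {B : Type*} [Fintype B] [DecidableEq B]
    (ks : Option B → Option B → ℝ)
    (hsymm : ∀ a b, ks a b = ks b a)
    (hspd : ∀ α : Option B → ℝ, α ≠ 0 →
      0 < ∑ a : Option B, ∑ b : Option B, α a * α b * ks a b)
    (hstop : ks none none = 1)
    {H : Type*} [NormedAddCommGroup H] [InnerProductSpace ℝ H]
    (φ : List B → H)
    (hrepr : ∀ X Y : List B, ⟪φ X, φ Y⟫ = kPW ks X Y) :
    (∀ (T : Finset (List B)) (α : List B → ℝ), (∃ X ∈ T, α X ≠ 0) →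
      0 < ∑ X ∈ T, ∑ Y ∈ T, α X * α Y * kPW ks X Y) ∧
    ∀ X : List B, ∃ d : H, ∀ Y : List B, ⟪d, φ Y⟫ = if Y = X then 1 else 0 := by
  have hks : (Matrix.of ks).PosDef := Matrix.posDef_of_sum_sum_pos hsymm hspd
  refine ⟨fun T α hα => (kPW_posDef_submatrix hks hstop T).sum_sum_pos T α hα, fun X => ?_⟩
  obtain ⟨T, β, hβ⟩ := exists_sum_mul_kPW_eq_ite hks hstop X
  refine ⟨∑ W : T, β W • φ W, fun Y => ?_⟩
  simp only [sum_inner, real_inner_smul_left, hrepr, hβ]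

/-- **The base position-wise comparison kernel is strictly positive definite and has
discrete masses.**  Here `k_s` is a symmetric strictly positive definite kernel on the
extended alphabet `𝓑 ∪ {$}` (encoded as `Option B`, with `none = $`) and
`k_s($,$) = 1`.  Given an RKHS representation `(H, φ)` of `k` with dense span, every
delta function lies in the RKHS. -/
theorem position_wise_kernel_spd_and_discrete_masses
    {B : Type*} [Fintype B] [DecidableEq B]
    (ks : Option B → Option B → ℝ)
    (hsymm : ∀ a b, ks a b = ks b a)
    (hspd : ∀ α : Option B → ℝ, α ≠ 0 →
      0 < ∑ a : Option B, ∑ b : Option B, α a * α b * ks a b)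
    (hstop : ks none none = 1)
    {H : Type*} [NormedAddCommGroup H] [InnerProductSpace ℝ H] [CompleteSpace H]
    (φ : List B → H)
    (hrepr : ∀ X Y : List B, ⟪φ X, φ Y⟫ = kPW ks X Y)
    (hdense : Dense (Submodule.span ℝ (Set.range φ) : Set H)) :
    (∀ (T : Finset (List B)) (α : List B → ℝ), (∃ X ∈ T, α X ≠ 0) →
      0 < ∑ X ∈ T, ∑ Y ∈ T, α X * α Y * kPW ks X Y) ∧
    ∀ X : List B, ∃ d : H, ∀ Y : List B, ⟪d, φ Y⟫ = if Y = X then 1 else 0 :=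
  position_wise_kernel_spd_and_discrete_masses_general ks hsymm hspd hstop φ hrepr
end

section
/- Let d_H denote the Hamming distance on the set S of finite strings over a finite alphabet (padded by stop symbols), and let C, β > 0. Then the inverse multiquadric Hamming kernel k(X,Y) = (C + d_H(X,Y))^{−β} is a positive semi-definite kernel on S with discrete masses. It admits the integral representation (C + d)^{−β} = Γ(β)^{−1} ∫_0^∞ λ^{β−1} e^{−Cλ} e^{−λ d} dλ, exhibiting it as a mixture over bandwidths of exponential Hamming kernels e^{−λ d_H(X,Y)}, each of which has discrete masses. -/
/-!
For `0 ≤ q ≤ 1` the exponential Hamming kernel factors at the first position,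
`q ^ d(X, Y) = (q + (1 - q) [X₀ = Y₀]) q ^ d(tail X, tail Y)`, so by induction on the length its
quadratic forms satisfy `∑ c_Y c_Z q ^ d(Y, Z) ≥ (1 - q) ^ (|X| + 1) c_X²`. The Gamma integral
`(C + d) ^ (-β) = Γ(β)⁻¹ ∫ λ ^ (β - 1) e ^ (-Cλ) e ^ (-λ d) dλ` exhibits the inverse multiquadric
kernel as a mixture of these kernels with `q = e ^ (-λ)`, so it inherits the lower bound with the
positive constant `ε_X = Γ(β)⁻¹ ∫ λ ^ (β - 1) e ^ (-Cλ) (1 - e ^ (-λ)) ^ (|X| + 1) dλ`. Hence `φ X`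
lies at distance `√ε_X` from the closed span of the other features, and a vector of the orthogonal
complement of that span, suitably scaled, is the discrete mass at `X`.
-/

open scoped RealInnerProductSpace Classical

/-- The Hamming distance between two strings over `B`, padded with stop symbols:
the number of positions at which the padded strings (`X[l]? : Option B`, with
`none` the stop symbol) differ. -/
noncomputable def hammingDistL {B : Type*} [DecidableEq B] (X Y : List B) : ℕ :=
  ((Finset.range (max X.length Y.length)).filter fun l => X[l]? ≠ Y[l]?).card

open Finset MeasureTheory

section KernelForm

variable {α β : Type*}

def kernelForm (K : α → α → ℝ) (S : Finset α) (c : α → ℝ) : ℝ :=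
  ∑ x ∈ S, ∑ y ∈ S, c x * c y * K x y

lemma kernelForm_singleton (K : α → α → ℝ) (x : α) (c : α → ℝ) :
    kernelForm K {x} c = c x ^ 2 * K x x := by
  simp [kernelForm, sq]

lemma kernelForm_mul_add_mul (K K' : α → α → ℝ) (a b : ℝ) (S : Finset α) (c : α → ℝ) :
    kernelForm (fun x y => a * K x y + b * K' x y) S c
      = a * kernelForm K S c + b * kernelForm K' S c := by
  simp only [kernelForm, mul_sum, ← sum_add_distrib]
  exact sum_congr rfl fun _ _ => sum_congr rfl fun _ _ => by ring

lemma kernelForm_const_mul (K : α → α → ℝ) (a : ℝ) (S : Finset α) (c : α → ℝ) :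
    kernelForm (fun x y => a * K x y) S c = a * kernelForm K S c := by
  simp only [kernelForm, mul_sum]
  exact sum_congr rfl fun _ _ => sum_congr rfl fun _ _ => by ring

lemma kernelForm_comp [DecidableEq β] (K : β → β → ℝ) (f : α → β) (S : Finset α) (c : α → ℝ) :
    kernelForm (fun x y => K (f x) (f y)) S c
      = kernelForm K (S.image f) (fun u => ∑ x ∈ S with f x = u, c x) := by
  have hf : ∀ x ∈ S, f x ∈ S.image f := fun x hx => mem_image_of_mem f hx
  simp only [kernelForm, sum_mul]
  rw [← sum_fiberwise_of_maps_to hf]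
  refine sum_congr rfl fun u _ => ?_
  conv_rhs => rw [Finset.sum_comm]
  refine sum_congr rfl fun x hx => ?_
  rw [← sum_fiberwise_of_maps_to hf]
  refine sum_congr rfl fun v _ => ?_
  rw [mul_sum, sum_mul]
  refine sum_congr rfl fun y hy => ?_
  rw [(mem_filter.1 hx).2, (mem_filter.1 hy).2]

lemma kernelForm_ite_eq [DecidableEq β] (K : α → α → ℝ) (h : α → β) (S : Finset α) (c : α → ℝ) :
    kernelForm (fun x y => if h x = h y then K x y else 0) S c
      = ∑ u ∈ S.image h, kernelForm K (S.filter (h · = u)) c := by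
  have hh : ∀ x ∈ S, h x ∈ S.image h := fun x hx => mem_image_of_mem h hx
  rw [kernelForm, ← sum_fiberwise_of_maps_to hh]
  refine sum_congr rfl fun u _ => sum_congr rfl fun x hx => ?_
  rw [(mem_filter.1 hx).2, sum_filter]
  exact sum_congr rfl fun y _ => by simp only [eq_comm, mul_ite, mul_zero]

lemma kernelForm_nonneg_of_forall_mem {S : Finset α} {c : α → ℝ} {K : α → α → ℝ}
    (m : α → ℝ) (hm : ∀ x, 0 ≤ m x) (h : ∀ x ∈ S, m x * c x ^ 2 ≤ kernelForm K S c) :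
    0 ≤ kernelForm K S c := by
  rcases S.eq_empty_or_nonempty with rfl | ⟨x, hx⟩
  · simp [kernelForm]
  · exact (mul_nonneg (hm x) (sq_nonneg _)).trans (h x hx)

end KernelForm

section Hamming

variable {B : Type*} [DecidableEq B]

lemma hammingDistL_eq_card_range {X Y : List B} {n : ℕ} (hn : max X.length Y.length ≤ n) :
    hammingDistL X Y = ((range n).filter fun l => X[l]? ≠ Y[l]?).card := by
  rw [hammingDistL]
  congr 1
  ext l
  simp only [mem_filter, mem_range]
  refine ⟨fun h => ⟨h.1.trans_le hn, h.2⟩, fun h => ⟨?_, h.2⟩⟩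
  by_contra hl
  rw [not_lt, max_le_iff] at hl
  exact h.2 (by rw [List.getElem?_eq_none hl.1, List.getElem?_eq_none hl.2])

lemma hammingDistL_eq_head?_tail (X Y : List B) :
    hammingDistL X Y = (if X.head? = Y.head? then 0 else 1) + hammingDistL X.tail Y.tail := by
  have htail : max X.tail.length Y.tail.length ≤ max X.length Y.length := by
    simp only [List.length_tail]; omega
  rw [hammingDistL_eq_card_range (Nat.le_succ _), hammingDistL_eq_card_range htail,
    card_filter, card_filter, sum_range_succ', add_comm]
  simp only [List.getElem?_tail, List.head?_eq_getElem?, ne_eq, ite_not]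

lemma pow_hammingDistL_eq (q : ℝ) (X Y : List B) :
    q ^ hammingDistL X Y = q * q ^ hammingDistL X.tail Y.tail
      + (1 - q) * (if X.head? = Y.head? then q ^ hammingDistL X.tail Y.tail else 0) := by
  rw [hammingDistL_eq_head?_tail, pow_add]
  split_ifs <;> ring

end Hamming

section ExpHamming

variable {B : Type*} [DecidableEq B]

lemma kernelForm_pow_hammingDistL (q : ℝ) (S : Finset (List B)) (c : List B → ℝ) :
    kernelForm (fun X Y => q ^ hammingDistL X Y) S c
      = q * kernelForm (fun X Y => q ^ hammingDistL X Y) (S.image List.tail)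
            (fun U => ∑ X ∈ S with X.tail = U, c X)
        + (1 - q) * ∑ o ∈ S.image List.head?,
            kernelForm (fun X Y => q ^ hammingDistL X Y) ((S.filter (·.head? = o)).image List.tail)
              (fun U => ∑ X ∈ S.filter (·.head? = o) with X.tail = U, c X) := by
  have hK : (fun X Y : List B => q ^ hammingDistL X Y) = fun X Y =>
      q * q ^ hammingDistL X.tail Y.tail
        + (1 - q) * (if X.head? = Y.head? then q ^ hammingDistL X.tail Y.tail else 0) :=
    funext₂ (pow_hammingDistL_eq q)
  conv_lhs => rw [hK]
  rw [kernelForm_mul_add_mul, kernelForm_comp (fun X Y => q ^ hammingDistL X Y) List.tail,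
    kernelForm_ite_eq (fun X Y => q ^ hammingDistL X.tail Y.tail) List.head?]
  simp only [kernelForm_comp (fun X Y => q ^ hammingDistL X Y) List.tail]

omit [DecidableEq B] in
lemma filter_head?_eq_none {S : Finset (List B)} (hS : [] ∈ S) :
    S.filter (·.head? = none) = {[]} := by
  ext Y
  simp only [mem_filter, List.head?_eq_none_iff, mem_singleton]
  exact ⟨And.right, fun h => ⟨h ▸ hS, h⟩⟩

lemma sum_filter_head?_tail_eq {S : Finset (List B)} {a : B} {X : List B} (hX : a :: X ∈ S)
    (c : List B → ℝ) :
    ∑ Y ∈ S.filter (·.head? = some a) with Y.tail = X, c Y = c (a :: X) := by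
  refine sum_eq_single_of_mem _ (by simp [hX]) fun Y hY hne => absurd ?_ hne
  simp only [mem_filter] at hY
  cases Y <;> simp_all

lemma kernelForm_pow_hammingDistL_singleton_nil (q : ℝ) (c : List B → ℝ) :
    kernelForm (fun Y Z => q ^ hammingDistL Y Z) {[]} c = c [] ^ 2 := by
  simp [kernelForm_singleton, hammingDistL]

lemma sq_mul_le_kernelForm_pow_hammingDistL_of_forall_length_le {q : ℝ} (hq0 : 0 ≤ q)
    (hq1 : q ≤ 1) {N : ℕ}
    (ih : ∀ T : Finset (List B), (∀ Y ∈ T, Y.length ≤ N) → ∀ e X, X ∈ T →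
      (1 - q) ^ (X.length + 1) * e X ^ 2 ≤ kernelForm (fun Y Z => q ^ hammingDistL Y Z) T e)
    {S : Finset (List B)} (hS : ∀ Y ∈ S, Y.length ≤ N + 1) (c : List B → ℝ) {X : List B}
    (hX : X ∈ S) :
    (1 - q) ^ (X.length + 1) * c X ^ 2 ≤ kernelForm (fun Y Z => q ^ hammingDistL Y Z) S c := by
  set K : List B → List B → ℝ := fun Y Z => q ^ hammingDistL Y Z
  have h1q : 0 ≤ 1 - q := sub_nonneg.2 hq1
  have hnonneg : ∀ T : Finset (List B), (∀ Y ∈ T, Y.length ≤ N) → ∀ e, 0 ≤ kernelForm K T e :=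
    fun T hT e => kernelForm_nonneg_of_forall_mem _ (fun _ => by positivity) (ih T hT e)
  have htail : ∀ T ⊆ S, ∀ Y ∈ T.image List.tail, Y.length ≤ N := by
    intro T hT Y hY
    obtain ⟨Z, hZ, rfl⟩ := mem_image.1 hY
    have := hS Z (hT hZ)
    rw [List.length_tail]
    omega
  set fiber : Option B → ℝ := fun o => kernelForm K ((S.filter (·.head? = o)).image List.tail)
    (fun U => ∑ Y ∈ S.filter (·.head? = o) with Y.tail = U, c Y)
  have hfiber : (1 - q) ^ (X.length + 1) * c X ^ 2 ≤ (1 - q) * fiber X.head? := by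
    cases X with
    | nil =>
      simp only [fiber, K, List.head?_nil, filter_head?_eq_none hX, image_singleton,
        List.tail_nil, kernelForm_pow_hammingDistL_singleton_nil]
      simp [filter_singleton]
    | cons a X =>
      have hmem : X ∈ (S.filter (·.head? = some a)).image List.tail :=
        mem_image.2 ⟨a :: X, by simp [hX], rfl⟩
      have := ih _ (htail _ (filter_subset _ _))
        (fun U => ∑ Y ∈ S.filter (·.head? = some a) with Y.tail = U, c Y) X hmem
      rw [sum_filter_head?_tail_eq hX] at this
      rw [List.length_cons, pow_succ', mul_assoc]
      exact mul_le_mul_of_nonneg_left this h1q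
  have hsum : fiber X.head? ≤ ∑ o ∈ S.image List.head?, fiber o :=
    single_le_sum (f := fiber) (fun o _ => hnonneg _ (htail _ (filter_subset _ _)) _)
      (mem_image_of_mem _ hX)
  have hq_part := mul_nonneg hq0 (hnonneg _ (htail S subset_rfl)
    (fun U => ∑ Y ∈ S with Y.tail = U, c Y))
  rw [kernelForm_pow_hammingDistL]
  nlinarith [mul_le_mul_of_nonneg_left hsum h1q]

theorem sq_mul_le_kernelForm_pow_hammingDistL {q : ℝ} (hq0 : 0 ≤ q) (hq1 : q ≤ 1)
    {S : Finset (List B)} {X : List B} (hX : X ∈ S) (c : List B → ℝ) :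
    (1 - q) ^ (X.length + 1) * c X ^ 2 ≤ kernelForm (fun Y Z => q ^ hammingDistL Y Z) S c := by
  suffices h : ∀ N, ∀ S : Finset (List B), (∀ Y ∈ S, Y.length ≤ N) → ∀ c X, X ∈ S →
      (1 - q) ^ (X.length + 1) * c X ^ 2 ≤ kernelForm (fun Y Z => q ^ hammingDistL Y Z) S c from
    h _ S (fun Y hY => le_sup (f := List.length) hY) c X hX
  intro N
  induction N with
  | zero =>
    intro S hS c X hX
    have hnil : ∀ Y ∈ S, Y = [] := fun Y hY =>
      List.eq_nil_of_length_eq_zero (Nat.le_zero.1 (hS Y hY))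
    obtain rfl := hnil X hX
    rw [eq_singleton_iff_unique_mem.2 ⟨hX, hnil⟩, kernelForm_pow_hammingDistL_singleton_nil,
      List.length_nil, zero_add, pow_one]
    nlinarith [sq_nonneg (c [])]
  | succ N ih =>
    exact fun S hS c X hX =>
      sq_mul_le_kernelForm_pow_hammingDistL_of_forall_length_le hq0 hq1 ih hS c hX

end ExpHamming

section Mixture

variable {α Ω : Type*} [MeasurableSpace Ω] {μ : Measure Ω} {G : Ω → α → α → ℝ}

lemma integrable_kernelForm (hG : ∀ x y, Integrable (fun t => G t x y) μ) (S : Finset α)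
    (c : α → ℝ) : Integrable (fun t => kernelForm (G t) S c) μ :=
  integrable_finsetSum _ fun x _ => integrable_finsetSum _ fun y _ => (hG x y).const_mul _

lemma kernelForm_integral (hG : ∀ x y, Integrable (fun t => G t x y) μ) (S : Finset α)
    (c : α → ℝ) :
    kernelForm (fun x y => ∫ t, G t x y ∂μ) S c = ∫ t, kernelForm (G t) S c ∂μ := by
  simp only [kernelForm]
  rw [integral_finsetSum _ fun x _ =>
    integrable_finsetSum _ fun y _ => (hG x y).const_mul _]
  refine sum_congr rfl fun x _ => ?_
  rw [integral_finsetSum _ fun y _ => (hG x y).const_mul _]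
  exact sum_congr rfl fun y _ => (integral_const_mul _ _).symm

lemma integral_mul_sq_le_kernelForm_integral (hG : ∀ x y, Integrable (fun t => G t x y) μ)
    {m : Ω → ℝ} (hm : 0 ≤ᵐ[μ] m) {S : Finset α} {c : α → ℝ} {x : α}
    (h : ∀ᵐ t ∂μ, m t * c x ^ 2 ≤ kernelForm (G t) S c) :
    (∫ t, m t ∂μ) * c x ^ 2 ≤ kernelForm (fun x y => ∫ t, G t x y ∂μ) S c := by
  rw [kernelForm_integral hG, ← integral_mul_const]
  exact integral_mono_of_nonneg (hm.mono fun t ht => mul_nonneg ht (sq_nonneg _))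
    (integrable_kernelForm hG S c) h

end Mixture

section InverseMultiquadric

open Real Set

lemma integrableOn_rpow_mul_exp_neg_mul {β r : ℝ} (hβ : 0 < β) (hr : 0 < r) :
    IntegrableOn (fun t => t ^ (β - 1) * exp (-(r * t))) (Ioi 0) :=
  Integrable.of_integral_ne_zero (by rw [integral_rpow_mul_exp_neg_mul_Ioi hβ hr]; positivity)

lemma exp_neg_mul_mul_exp_neg_mul (C x t : ℝ) :
    exp (-(C * t)) * exp (-(t * x)) = exp (-((C + x) * t)) := by
  rw [← exp_add]
  ring_nf

lemma add_rpow_neg_eq_integral {C β x : ℝ} (hβ : 0 < β) (hx : 0 < C + x) :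
    (C + x) ^ (-β) = (Gamma β)⁻¹ *
      ∫ t in Ioi 0, t ^ (β - 1) * exp (-(C * t)) * exp (-(t * x)) := by
  simp_rw [mul_assoc, exp_neg_mul_mul_exp_neg_mul]
  rw [integral_rpow_mul_exp_neg_mul_Ioi hβ hx, one_div, inv_rpow hx.le, rpow_neg hx.le,
    mul_comm _ (Gamma β), inv_mul_cancel_left₀ (Gamma_pos_of_pos hβ).ne']

noncomputable def imqMass (C β : ℝ) (n : ℕ) : ℝ :=
  ∫ t in Ioi 0, (Gamma β)⁻¹ * (t ^ (β - 1) * exp (-(C * t))) * (1 - exp (-t)) ^ (n + 1)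

lemma imqMass_pos {C β : ℝ} (hC : 0 < C) (hβ : 0 < β) (n : ℕ) : 0 < imqMass C β n := by
  set f : ℝ → ℝ := fun t => (Gamma β)⁻¹ * (t ^ (β - 1) * exp (-(C * t))) * (1 - exp (-t)) ^ (n + 1)
  have hpos : ∀ t ∈ Ioi (0 : ℝ), 0 < f t := by
    intro t ht
    have : 0 < 1 - exp (-t) := sub_pos.2 (exp_lt_one_iff.2 (neg_lt_zero.2 ht))
    have : 0 < t ^ (β - 1) := rpow_pos_of_pos ht _
    positivity
  have hint : IntegrableOn f (Ioi 0) := by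
    refine ((integrableOn_rpow_mul_exp_neg_mul hβ hC).const_mul _).mul_bdd
      (c := 1) (by fun_prop) ((ae_restrict_iff' measurableSet_Ioi).2 (.of_forall fun t ht => ?_))
    have h1 : exp (-t) ≤ 1 := exp_le_one_iff.2 (neg_nonpos.2 (le_of_lt ht))
    rw [norm_pow, Real.norm_of_nonneg (sub_nonneg.2 h1)]
    exact pow_le_one₀ (sub_nonneg.2 h1) (sub_le_self _ (exp_pos _).le)
  have hsupp : Set.Ioi (0 : ℝ) ⊆ Function.support f := fun t ht => (hpos t ht).ne'
  rw [imqMass, setIntegral_pos_iff_support_of_nonneg_ae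
    ((ae_restrict_iff' measurableSet_Ioi).2 (.of_forall fun t ht => (hpos t ht).le)) hint,
    inter_eq_right.2 hsupp, volume_Ioi]
  exact ENNReal.zero_lt_top

end InverseMultiquadric

section InverseMultiquadricHamming

open Real Set

variable {B : Type*} [DecidableEq B]

theorem imqMass_mul_sq_le_kernelForm {C β : ℝ} (hC : 0 < C) (hβ : 0 < β) {S : Finset (List B)}
    {X : List B} (hX : X ∈ S) (c : List B → ℝ) :
    imqMass C β X.length * c X ^ 2
      ≤ kernelForm (fun Y Z => (C + (hammingDistL Y Z : ℝ)) ^ (-β)) S c := by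
  set w : ℝ → ℝ := fun t => (Gamma β)⁻¹ * (t ^ (β - 1) * exp (-(C * t)))
  set G : ℝ → List B → List B → ℝ := fun t Y Z => w t * exp (-t) ^ hammingDistL Y Z
  have hG : ∀ Y Z, (G · Y Z) = fun t => (Gamma β)⁻¹ *
      (t ^ (β - 1) * exp (-(C * t)) * exp (-(t * hammingDistL Y Z))) := fun Y Z => by
    funext t
    simp only [G, w, ← exp_nat_mul]
    ring_nf
  have hG_int : ∀ Y Z, Integrable (G · Y Z) (volume.restrict (Ioi 0)) := fun Y Z => by
    simp_rw [hG, mul_assoc, exp_neg_mul_mul_exp_neg_mul]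
    exact (integrableOn_rpow_mul_exp_neg_mul hβ (by positivity)).const_mul _
  have hK : (fun Y Z : List B => (C + (hammingDistL Y Z : ℝ)) ^ (-β))
      = fun Y Z => ∫ t in Ioi 0, G t Y Z := by
    funext Y Z
    rw [add_rpow_neg_eq_integral hβ (by positivity), ← integral_const_mul, hG]
  have hw : ∀ t ∈ Ioi (0 : ℝ), 0 ≤ w t := fun t ht => by
    have := (Gamma_pos_of_pos hβ).le
    have := rpow_nonneg (le_of_lt ht) (β - 1)
    positivity
  rw [hK, imqMass]
  refine integral_mul_sq_le_kernelForm_integral hG_int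
    ((ae_restrict_iff' measurableSet_Ioi).2 (.of_forall fun t ht => ?_))
    ((ae_restrict_iff' measurableSet_Ioi).2 (.of_forall fun t ht => ?_))
  · have : 0 ≤ 1 - exp (-t) := sub_nonneg.2 (exp_le_one_iff.2 (neg_nonpos.2 (le_of_lt ht)))
    exact mul_nonneg (hw t ht) (pow_nonneg this _)
  · have hq := sq_mul_le_kernelForm_pow_hammingDistL (exp_pos (-t)).le
      (exp_le_one_iff.2 (neg_nonpos.2 (le_of_lt ht))) hX c
    rw [kernelForm_const_mul, mul_assoc]
    exact mul_le_mul_of_nonneg_left hq (hw t ht)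

end InverseMultiquadricHamming

section DiscreteMass

variable {α H : Type*} [NormedAddCommGroup H] [InnerProductSpace ℝ H]
  {K : α → α → ℝ} {φ : α → H}

lemma inner_sum_smul_self_eq_kernelForm (hφ : ∀ x y, ⟪φ x, φ y⟫ = K x y) (S : Finset α)
    (c : α → ℝ) : ⟪∑ x ∈ S, c x • φ x, ∑ y ∈ S, c y • φ y⟫ = kernelForm K S c := by
  rw [sum_inner]
  simp only [inner_sum, real_inner_smul_left, real_inner_smul_right, hφ, kernelForm]
  exact sum_congr rfl fun _ _ => sum_congr rfl fun _ _ => by ring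

lemma exists_inner_eq_ite_of_notMem_topologicalClosure [DecidableEq α] [CompleteSpace H] {x : α}
    (hx : φ x ∉ (Submodule.span ℝ (φ '' {y | y ≠ x})).topologicalClosure) :
    ∃ d : H, ∀ y, ⟪d, φ y⟫ = if y = x then 1 else 0 := by
  set U := Submodule.span ℝ (φ '' {y | y ≠ x})
  rw [← Submodule.orthogonal_orthogonal_eq_closure, Submodule.mem_orthogonal] at hx
  push Not at hx
  obtain ⟨d, hd, hdx⟩ := hx
  refine ⟨⟪d, φ x⟫⁻¹ • d, fun y => ?_⟩
  rw [real_inner_smul_left]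
  split_ifs with hy
  · rw [hy, inv_mul_cancel₀ hdx]
  · have hyU : φ y ∈ U := Submodule.subset_span (Set.mem_image_of_mem φ hy)
    rw [Submodule.inner_left_of_mem_orthogonal hyU hd, mul_zero]

lemma notMem_topologicalClosure_span_of_mul_sq_le_kernelForm
    (hφ : ∀ x y, ⟪φ x, φ y⟫ = K x y) {x : α} {ε : ℝ} (hε : 0 < ε)
    (h : ∀ (S : Finset α) (c : α → ℝ), x ∈ S → ε * c x ^ 2 ≤ kernelForm K S c) :
    φ x ∉ (Submodule.span ℝ (φ '' {y | y ≠ x})).topologicalClosure := by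
  have hdist : ∀ w ∈ Submodule.span ℝ (φ '' {y | y ≠ x}), ε ≤ ‖φ x - w‖ ^ 2 := by
    intro w hw
    obtain ⟨l, hl, rfl⟩ := (Finsupp.mem_span_image_iff_linearCombination ℝ).1 hw
    have hlx : l x = 0 := (Finsupp.mem_supported' ℝ l).1 hl x (by simp)
    have hsupp : Finsupp.single x (1 : ℝ) - l ∈ Finsupp.supported ℝ ℝ ↑(insert x l.support) :=
      fun y hy => by
        rcases mem_union.1 (Finsupp.support_sub hy) with hy | hy
        · exact mem_insert.2 (Or.inl (mem_singleton.1 (Finsupp.support_single_subset hy)))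
        · exact mem_insert_of_mem hy
    have hrepr : φ x - Finsupp.linearCombination ℝ φ l
        = ∑ y ∈ insert x l.support, (Finsupp.single x (1 : ℝ) - l) y • φ y := by
      rw [← Finsupp.linearCombination_apply_of_mem_supported ℝ hsupp, map_sub,
        Finsupp.linearCombination_single, one_smul]
    rw [hrepr, ← real_inner_self_eq_norm_sq, inner_sum_smul_self_eq_kernelForm hφ]
    simpa [hlx] using h _ (Finsupp.single x (1 : ℝ) - l) (mem_insert_self x l.support)
  intro hmem
  rw [← SetLike.mem_coe, Submodule.topologicalClosure_coe] at hmem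
  have : ε ≤ ‖φ x - φ x‖ ^ 2 := closure_minimal hdist
    (isClosed_le continuous_const ((continuous_const.sub continuous_id).norm.pow 2)) hmem
  rw [sub_self, norm_zero, sq, mul_zero] at this
  linarith

end DiscreteMass

theorem imq_hamming_kernel_discrete_masses_general
    {B : Type*} [DecidableEq B]
    (C β : ℝ) (hC : 0 < C) (hβ : 0 < β)
    (k : List B → List B → ℝ)
    (hk : ∀ X Y : List B, k X Y = (C + (hammingDistL X Y : ℝ)) ^ (-β))
    {H : Type*} [NormedAddCommGroup H] [InnerProductSpace ℝ H] [CompleteSpace H]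
    (φ : List B → H)
    (hrepr : ∀ X Y : List B, ⟪φ X, φ Y⟫ = k X Y) :
    (∀ (T : Finset (List B)) (α : List B → ℝ),
      0 ≤ ∑ X ∈ T, ∑ Y ∈ T, α X * α Y * k X Y) ∧
    (∀ X : List B, ∃ d : H, ∀ Y : List B, ⟪d, φ Y⟫ = if Y = X then 1 else 0) ∧
    (∀ d : ℕ, (C + (d : ℝ)) ^ (-β) =
      (Real.Gamma β)⁻¹ *
        ∫ t in Set.Ioi (0 : ℝ),
          t ^ (β - 1) * Real.exp (-(C * t)) * Real.exp (-(t * (d : ℝ)))) := by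
  obtain rfl : k = fun X Y => (C + (hammingDistL X Y : ℝ)) ^ (-β) := funext₂ hk
  refine ⟨fun T α => ?_, fun X => ?_, fun d => add_rpow_neg_eq_integral hβ (by positivity)⟩
  · change 0 ≤ kernelForm _ T α
    rw [← inner_sum_smul_self_eq_kernelForm hrepr]
    exact real_inner_self_nonneg
  · exact exists_inner_eq_ite_of_notMem_topologicalClosure
      (notMem_topologicalClosure_span_of_mul_sq_le_kernelForm hrepr (imqMass_pos hC hβ X.length)
        fun S c hX => imqMass_mul_sq_le_kernelForm hC hβ hX c)

/-- **The inverse multiquadric Hamming kernel has discrete masses.**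
For `C, β > 0`, the kernel `k(X,Y) = (C + d_H(X,Y))^{-β}` on finite strings is
positive semi-definite and, for any RKHS representation `(H, φ)` with dense span,
has discrete masses.  Moreover it is a mixture over bandwidths of exponential
Hamming kernels: `(C + d)^{-β} = Γ(β)⁻¹ ∫₀^∞ λ^{β-1} e^{-Cλ} e^{-λ d} dλ`. -/
theorem imq_hamming_kernel_discrete_masses
    {B : Type*} [Fintype B] [DecidableEq B]
    (C β : ℝ) (hC : 0 < C) (hβ : 0 < β)
    (k : List B → List B → ℝ)
    (hk : ∀ X Y : List B, k X Y = (C + (hammingDistL X Y : ℝ)) ^ (-β))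
    {H : Type*} [NormedAddCommGroup H] [InnerProductSpace ℝ H] [CompleteSpace H]
    (φ : List B → H)
    (hrepr : ∀ X Y : List B, ⟪φ X, φ Y⟫ = k X Y)
    (hdense : Dense (Submodule.span ℝ (Set.range φ) : Set H)) :
    (∀ (T : Finset (List B)) (α : List B → ℝ),
      0 ≤ ∑ X ∈ T, ∑ Y ∈ T, α X * α Y * k X Y) ∧
    (∀ X : List B, ∃ d : H, ∀ Y : List B, ⟪d, φ Y⟫ = if Y = X then 1 else 0) ∧
    (∀ d : ℕ, (C + (d : ℝ)) ^ (-β) =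
      (Real.Gamma β)⁻¹ *
        ∫ t in Set.Ioi (0 : ℝ),
          t ^ (β - 1) * Real.exp (-(C * t)) * Real.exp (-(t * (d : ℝ)))) :=
  imq_hamming_kernel_discrete_masses_general C β hC hβ k hk φ hrepr
end

section
/- Let F : S → ℝ^D be an injective embedding of a countably infinite set S, and k_E(z, z') = Ψ(z − z') a translation-invariant kernel where Ψ is positive, continuous, and has a strictly positive Fourier transform. Define k(X,Y) = Ψ(F(X) − F(Y)). Then k is characteristic on S: if μ and ν are finitely supported probability distributions on S with equal kernel mean embeddings in H_k (equivalently MMD_k(μ,ν) = 0), then μ = ν. Conversely, if F is not injective, k is not characteristic. -/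
/-!
Writing `Ψ(z) = ∫ 𝐞⟪ξ, z⟫ 𝓕Ψ(ξ) dξ`, the kernel energy of a finitely supported signed measure
`q` on `ℝ^D` is `∫ |p(ξ)|² 𝓕Ψ(ξ) dξ`, where `p(ξ) = ∑ₓ q(x) 𝐞⟪ξ, x⟫`. Since `𝓕Ψ > 0` and `p` is
continuous, zero energy forces `p = 0`, hence `q = 0` because distinct characters are linearly
independent. Fourier inversion needs `𝓕Ψ` integrable: damping with Gaussians, the integrals
`∫ e^{-‖ξ‖²/c} 𝓕Ψ(ξ) dξ` converge to `Ψ(0)`, so Fatou's lemma bounds `∫ 𝓕Ψ` by `Ψ(0)`.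
The energy of `μ - ν` on `S` is the energy of its pushforward along `F`, which vanishes only
for `μ = ν` when `F` is injective; if `F X = F Y` with `X ≠ Y`, the Dirac masses at `X` and `Y`
have the same pushforward.
-/

open scoped FourierTransform ComplexOrder ComplexConjugate RealInnerProductSpace Topology
open MeasureTheory Filter Complex Module
open Real hiding exp

def kernelEnergy {α R : Type*} [Semiring R] (k : α → α → R) (q : α →₀ R) : R :=
  q.sum fun x a ↦ q.sum fun y b ↦ a * b * k x y

lemma kernelEnergy_mapDomain {α β R : Type*} [Semiring R] (K : β → β → R) (F : α → β)
    (q : α →₀ R) :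
    kernelEnergy K (q.mapDomain F) = kernelEnergy (fun x y ↦ K (F x) (F y)) q := by
  unfold kernelEnergy
  rw [Finsupp.sum_mapDomain_index (by simp) (by simp [add_mul, Finsupp.sum_add])]
  refine Finsupp.sum_congr fun x _ ↦ ?_
  rw [Finsupp.sum_mapDomain_index (by simp) (by simp [mul_add, add_mul])]

lemma kernelEnergy_single_sub_single_of_eq {α β R : Type*} [Ring R] (K : β → β → R)
    {F : α → β} {x y : α} (h : F x = F y) :
    kernelEnergy (fun x y ↦ K (F x) (F y)) (Finsupp.single x 1 - Finsupp.single y 1) = 0 := by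
  rw [← kernelEnergy_mapDomain, Finsupp.mapDomain_sub, Finsupp.mapDomain_single,
    Finsupp.mapDomain_single, h, sub_self]
  simp [kernelEnergy]

section

variable {V : Type*} [NormedAddCommGroup V] [InnerProductSpace ℝ V]

noncomputable def innerChar (x : V) : AddChar V ℂ :=
  Circle.coeHom.compAddChar (𝐞.compAddMonoidHom ((innerₗ V).flip x).toAddMonoidHom)

lemma innerChar_apply (x ξ : V) : innerChar x ξ = 𝐞 ⟪ξ, x⟫ := rfl

lemma innerChar_injective : Function.Injective (innerChar (V := V)) := by
  intro x y hxy
  by_contra hne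
  have hd : ∀ ξ : V, 𝐞 ⟪ξ, x - y⟫ = 1 := fun ξ ↦ by
    have := DFunLike.congr_fun hxy ξ
    rw [innerChar_apply, innerChar_apply, Circle.coe_inj] at this
    rw [inner_sub_right, AddChar.map_sub_eq_div, this, div_self']
  apply Real.fourierChar_ne_one
  ext t
  have hn : ‖x - y‖ ^ 2 ≠ 0 := by simpa [sub_eq_zero] using hne
  have := hd ((t / ‖x - y‖ ^ 2) • (x - y))
  rw [real_inner_smul_left, real_inner_self_eq_norm_sq, div_mul_cancel₀ _ hn] at this
  simp [this]

lemma linearIndependent_innerChar :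
    LinearIndependent ℂ (fun x : V ↦ (innerChar x : V → ℂ)) :=
  (linearIndependent_monoidHom (Multiplicative V) ℂ).comp (fun x ↦ (innerChar x).toMonoidHom)
    fun _ _ h ↦ innerChar_injective (AddChar.toMonoidHomEquiv.injective h)

lemma fourierChar_inner_mul_conj (x y ξ : V) :
    (𝐞 ⟪ξ, x⟫ : ℂ) * conj (𝐞 ⟪ξ, y⟫ : ℂ) = 𝐞 ⟪ξ, x - y⟫ := by
  rw [← Circle.coe_inv_eq_conj, ← Circle.coe_mul, inner_sub_right, AddChar.map_sub_eq_div,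
    div_eq_mul_inv]

noncomputable def trigPoly (q : V →₀ ℝ) : V → ℂ :=
  Finsupp.linearCombination ℝ (fun x ↦ (innerChar x : V → ℂ)) q

lemma trigPoly_apply (q : V →₀ ℝ) (ξ : V) :
    trigPoly q ξ = q.sum fun x a ↦ (a : ℂ) * 𝐞 ⟪ξ, x⟫ := by
  simp [trigPoly, Finsupp.linearCombination_apply, Finsupp.sum, innerChar_apply]

lemma continuous_trigPoly (q : V →₀ ℝ) : Continuous (trigPoly q) := by
  simp_rw [funext (trigPoly_apply q), Finsupp.sum]
  fun_prop

lemma eq_zero_of_trigPoly_eq_zero {q : V →₀ ℝ} (h : trigPoly q = 0) : q = 0 :=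
  linearIndependent_iff.mp (linearIndependent_innerChar.restrict_scalars' ℝ) q h

lemma sq_norm_trigPoly (q : V →₀ ℝ) (ξ : V) :
    ((‖trigPoly q ξ‖ ^ 2 : ℝ) : ℂ) =
      q.sum fun x a ↦ q.sum fun y b ↦ ((a * b : ℝ) : ℂ) * 𝐞 ⟪ξ, x - y⟫ := by
  rw [ofReal_pow, ← mul_conj']
  simp only [trigPoly_apply, Finsupp.sum, map_sum, Finset.sum_mul_sum]
  refine Finset.sum_congr rfl fun x _ ↦ Finset.sum_congr rfl fun y _ ↦ ?_
  rw [← fourierChar_inner_mul_conj, map_mul, conj_ofReal]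
  push_cast
  ring

variable [FiniteDimensional ℝ V] [MeasurableSpace V] [BorelSpace V]
  {E : Type*} [NormedAddCommGroup E] [NormedSpace ℂ E]

lemma MeasureTheory.Integrable.continuous_fourier {f : V → E} (hf : Integrable f) :
    Continuous (𝓕 f) :=
  VectorFourier.fourierIntegral_continuous Real.continuous_fourierChar continuous_inner hf

lemma MeasureTheory.Integrable.memLp_top_fourier {f : V → E} (hf : Integrable f) :
    MemLp (𝓕 f) ⊤ :=
  memLp_top_of_bound hf.continuous_fourier.aestronglyMeasurable _ <| .of_forall fun ξ ↦
    VectorFourier.norm_fourierIntegral_le_integral_norm _ _ _ _ ξ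

lemma integrable_cexp_neg_inv_mul_sq_norm {c : ℝ} (hc : 0 < c) :
    Integrable (fun w : V ↦ cexp (-c⁻¹ * ‖w‖ ^ 2)) := by
  simpa using GaussianFourier.integrable_cexp_neg_mul_sq_norm_add (V := V)
    (b := (c⁻¹ : ℂ)) (by simpa using hc) 0 0

variable [CompleteSpace E]

-- The right-hand side is the shape of `Real.tendsto_integral_gaussian_smul'` at `v = 0`.
lemma integral_cexp_neg_sq_smul_fourier {f : V → E} (hf : Integrable f) {c : ℝ} (hc : 0 < c) :
    ∫ w : V, cexp (-c⁻¹ * ‖w‖ ^ 2) • 𝓕 f w =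
      ∫ w : V, ((π * c : ℂ) ^ (finrank ℝ V / 2 : ℂ) * cexp (-π ^ 2 * c * ‖0 - w‖ ^ 2)) • f w := by
  have hflip := VectorFourier.integral_fourierIntegral_smul_eq_flip (L := innerₗ V)
      Real.continuous_fourierChar continuous_inner (integrable_cexp_neg_inv_mul_sq_norm hc) hf
  simp only [flip_innerₗ] at hflip
  change ∫ w, 𝓕 (fun w : V ↦ cexp (-c⁻¹ * ‖w‖ ^ 2)) w • f w =
    ∫ w, cexp (-c⁻¹ * ‖w‖ ^ 2) • 𝓕 f w at hflip
  rw [← hflip]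
  congr with w
  rw [fourier_gaussian_innerProductSpace (by simpa using hc)]
  congr
  · simp
  · simp; ring

lemma tendsto_integral_cexp_neg_sq_smul_fourier {f : V → E} (hf : Integrable f)
    (h0 : ContinuousAt f 0) :
    Tendsto (fun c : ℝ ↦ ∫ w : V, cexp (-c⁻¹ * ‖w‖ ^ 2) • 𝓕 f w) atTop (𝓝 (f 0)) :=
  (Real.tendsto_integral_gaussian_smul' hf h0).congr' <| by
    filter_upwards [Ioi_mem_atTop 0] with c hc
    exact (integral_cexp_neg_sq_smul_fourier hf hc).symm

lemma integrable_fourier_of_nonneg {f : V → ℂ} (hf : Integrable f) (h0 : ContinuousAt f 0)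
    (hnonneg : ∀ ξ, 0 ≤ 𝓕 f ξ) : Integrable (𝓕 f) := by
  set G : ℝ → V → ℂ := fun c w ↦ cexp (-c⁻¹ * ‖w‖ ^ 2) • 𝓕 f w
  have hG_int : ∀ c > 0, Integrable (G c) := fun c hc ↦
    (integrable_cexp_neg_inv_mul_sq_norm hc).smul_of_top_left hf.memLp_top_fourier
  have hG_cont : ∀ c, Continuous (G c) := fun c ↦
    (by fun_prop : Continuous fun w : V ↦ cexp (-c⁻¹ * ‖w‖ ^ 2)).smul hf.continuous_fourier
  have hG_nonneg : ∀ c w, 0 ≤ G c w := fun c w ↦ by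
    refine mul_nonneg ?_ (hnonneg w)
    have : cexp (-(c⁻¹ : ℝ) * ‖w‖ ^ 2) = (rexp (-c⁻¹ * ‖w‖ ^ 2) : ℂ) := by
      push_cast; ring_nf
    rw [this]
    exact_mod_cast (Real.exp_pos _).le
  have hG_lim : ∀ w, Tendsto (fun c ↦ G c w) atTop (𝓝 (𝓕 f w)) := fun w ↦ by
    have : Tendsto (fun c : ℝ ↦ cexp (-c⁻¹ * ‖w‖ ^ 2)) atTop (𝓝 1) := by
      simpa using (tendsto_inv_atTop_zero.ofReal.neg.mul_const ((‖w‖ : ℂ) ^ 2)).cexp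
    simpa [G] using this.smul_const (𝓕 f w)
  have hG_lintegral : Tendsto (fun c ↦ ∫⁻ w, ‖G c w‖ₑ) atTop (𝓝 (ENNReal.ofReal (f 0).re)) := by
    refine (ENNReal.tendsto_ofReal ((Complex.continuous_re.tendsto _).comp
      (tendsto_integral_cexp_neg_sq_smul_fourier hf h0))).congr' ?_
    filter_upwards [Ioi_mem_atTop 0] with c hc
    rw [← ofReal_integral_norm_eq_lintegral_enorm (hG_int c hc)]
    congr 1
    calc (∫ w, G c w).re = ∫ w, (G c w).re := (integral_re (hG_int c hc)).symm
      _ = ∫ w, ‖G c w‖ := integral_congr_ae (.of_forall fun w ↦ re_eq_norm.2 (hG_nonneg c w))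
  refine ⟨hf.continuous_fourier.aestronglyMeasurable, ?_⟩
  calc ∫⁻ w, ‖𝓕 f w‖ₑ = ∫⁻ w, liminf (fun c ↦ ‖G c w‖ₑ) atTop :=
        lintegral_congr fun w ↦ (hG_lim w).enorm.liminf_eq.symm
    _ ≤ liminf (fun c ↦ ∫⁻ w, ‖G c w‖ₑ) atTop :=
        lintegral_liminf_le' fun c ↦ (hG_cont c).aemeasurable.enorm
    _ = ENNReal.ofReal (f 0).re := hG_lintegral.liminf_eq
    _ < ⊤ := ENNReal.ofReal_lt_top

lemma integrable_fourierChar_inner_mul {f : V → ℂ} (hf : Integrable f) (x : V) :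
    Integrable fun ξ ↦ (𝐞 ⟪ξ, x⟫ : ℂ) * f ξ :=
  hf.bdd_mul (by fun_prop : Continuous _).aestronglyMeasurable
    (.of_forall fun _ ↦ (Circle.norm_coe _).le)

lemma integrable_sq_norm_trigPoly_mul {f : V → ℂ} (hf : Integrable f) (q : V →₀ ℝ) :
    Integrable fun ξ ↦ ((‖trigPoly q ξ‖ ^ 2 : ℝ) : ℂ) * f ξ := by
  simp_rw [sq_norm_trigPoly, Finsupp.sum, Finset.sum_mul, mul_assoc]
  exact integrable_finsetSum _ fun x _ ↦ integrable_finsetSum _ fun y _ ↦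
    (integrable_fourierChar_inner_mul hf _).const_mul _

lemma integral_sq_norm_trigPoly_mul_fourier {Ψ : V → ℝ} (hcont : Continuous Ψ)
    (hint : Integrable Ψ) (hFT : Integrable (𝓕 fun z ↦ (Ψ z : ℂ))) (q : V →₀ ℝ) :
    ∫ ξ, ((‖trigPoly q ξ‖ ^ 2 : ℝ) : ℂ) * 𝓕 (fun z ↦ (Ψ z : ℂ)) ξ =
      kernelEnergy (fun x y ↦ Ψ (x - y)) q := by
  have hinv : ∀ x, ∫ ξ, (𝐞 ⟪ξ, x⟫ : ℂ) * 𝓕 (fun z ↦ (Ψ z : ℂ)) ξ = Ψ x := fun x ↦ by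
    have h := congrFun ((show Continuous fun z ↦ (Ψ z : ℂ) by fun_prop).fourierInv_fourier_eq
      hint.ofReal hFT) x
    rwa [fourierInv_eq] at h
  simp_rw [sq_norm_trigPoly, Finsupp.sum, Finset.sum_mul, mul_assoc]
  rw [integral_finsetSum _ fun x _ ↦ integrable_finsetSum _ fun y _ ↦
    (integrable_fourierChar_inner_mul hFT _).const_mul _]
  simp_rw [integral_finsetSum _ fun y _ ↦ (integrable_fourierChar_inner_mul hFT _).const_mul _,
    integral_const_mul, hinv]
  simp [kernelEnergy, Finsupp.sum]

theorem eq_zero_of_kernelEnergy_eq_zero {Ψ : V → ℝ} (hcont : Continuous Ψ) (hint : Integrable Ψ)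
    (hpos : ∀ ξ, 0 < 𝓕 (fun z ↦ (Ψ z : ℂ)) ξ) {q : V →₀ ℝ}
    (hq : kernelEnergy (fun x y ↦ Ψ (x - y)) q = 0) : q = 0 := by
  have hFT := integrable_fourier_of_nonneg hint.ofReal
    (show Continuous fun z ↦ (Ψ z : ℂ) by fun_prop).continuousAt fun ξ ↦ (hpos ξ).le
  have hre : ∀ ξ, 0 < (𝓕 (fun z ↦ (Ψ z : ℂ)) ξ).re := fun ξ ↦ (pos_iff.1 (hpos ξ)).1
  set g : V → ℝ := fun ξ ↦ ‖trigPoly q ξ‖ ^ 2 * (𝓕 (fun z ↦ (Ψ z : ℂ)) ξ).re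
  have hg_re : g = fun ξ ↦ (((‖trigPoly q ξ‖ ^ 2 : ℝ) : ℂ) * 𝓕 (fun z ↦ (Ψ z : ℂ)) ξ).re :=
    funext fun ξ ↦ (re_ofReal_mul _ _).symm
  have hg_int : Integrable g := hg_re ▸ (integrable_sq_norm_trigPoly_mul hFT q).re
  have hg_zero : ∫ ξ, g ξ = 0 :=
    calc ∫ ξ, g ξ = (∫ ξ, ((‖trigPoly q ξ‖ ^ 2 : ℝ) : ℂ) * 𝓕 (fun z ↦ (Ψ z : ℂ)) ξ).re := by
          rw [hg_re]
          exact integral_re (integrable_sq_norm_trigPoly_mul hFT q)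
      _ = 0 := by
          rw [integral_sq_norm_trigPoly_mul_fourier hcont hint hFT, hq, ofReal_zero, zero_re]
  have hg_cont : Continuous g :=
    ((continuous_trigPoly q).norm.pow 2).mul (continuous_re.comp hint.ofReal.continuous_fourier)
  refine eq_zero_of_trigPoly_eq_zero (funext fun ξ ↦ by_contra fun hξ ↦ hg_zero.not_gt ?_)
  exact integral_pos_of_integrable_nonneg_nonzero hg_cont hg_int
    (fun ξ ↦ mul_nonneg (sq_nonneg _) (hre ξ).le) (mul_ne_zero (by simpa using hξ) (hre ξ).ne')

end

theorem embedding_kernel_characteristic_iff_injective_general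
    {S : Type*} {D : ℕ}
    (F : S → EuclideanSpace ℝ (Fin D))
    (Ψ : EuclideanSpace ℝ (Fin D) → ℝ)
    (hΨcont : Continuous Ψ)
    (hΨint : MeasureTheory.Integrable Ψ)
    (hΨfour : ∀ ξ : EuclideanSpace ℝ (Fin D),
      0 < (𝓕 (fun z => (Ψ z : ℂ)) ξ).re ∧ (𝓕 (fun z => (Ψ z : ℂ)) ξ).im = 0)
    (k : S → S → ℝ)
    (hk : ∀ X Y : S, k X Y = Ψ (F X - F Y)) :
    (Function.Injective F →
      ∀ μ ν : S →₀ ℝ, (∀ X, 0 ≤ μ X) → (∀ X, 0 ≤ ν X) →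
        (μ.sum fun _ a => a) = 1 → (ν.sum fun _ a => a) = 1 →
        ((μ - ν).sum fun X a => (μ - ν).sum fun Y b => a * b * k X Y) = 0 →
        μ = ν) ∧
    (¬ Function.Injective F →
      ∃ μ ν : S →₀ ℝ, (∀ X, 0 ≤ μ X) ∧ (∀ X, 0 ≤ ν X) ∧
        (μ.sum fun _ a => a) = 1 ∧ (ν.sum fun _ a => a) = 1 ∧ μ ≠ ν ∧
        ((μ - ν).sum fun X a => (μ - ν).sum fun Y b => a * b * k X Y) = 0) := by
  obtain rfl : k = fun X Y ↦ Ψ (F X - F Y) := funext₂ hk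
  refine ⟨fun hinj μ ν _ _ _ _ hE ↦ ?_, fun hninj ↦ ?_⟩
  · have hpos : ∀ ξ, 0 < 𝓕 (fun z ↦ (Ψ z : ℂ)) ξ :=
      fun ξ ↦ pos_iff.2 ⟨(hΨfour ξ).1, (hΨfour ξ).2.symm⟩
    rw [← sub_eq_zero, ← (Finsupp.mapDomain_injective hinj).eq_iff, Finsupp.mapDomain_zero]
    exact eq_zero_of_kernelEnergy_eq_zero hΨcont hΨint hpos
      ((kernelEnergy_mapDomain _ F _).trans hE)
  · obtain ⟨X, Y, hF, hXY⟩ := Function.not_injective_iff.mp hninj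
    exact ⟨.single X 1, .single Y 1, Finsupp.single_nonneg.2 zero_le_one,
      Finsupp.single_nonneg.2 zero_le_one, by simp, by simp,
      (Finsupp.single_left_injective one_ne_zero).ne hXY,
      kernelEnergy_single_sub_single_of_eq (fun x y ↦ Ψ (x - y)) hF⟩

/-- **Embedding kernels are characteristic iff the embedding is injective.**
Let `F : S → ℝ^D` be an embedding of a countably infinite set and
`k(X,Y) = Ψ(F X − F Y)` a translation-invariant embedding kernel, where `Ψ` is
positive, continuous and integrable with an (everywhere real and) strictly positive
Fourier transform.  If `F` is injective, then `k` is characteristic: any two finitely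
supported probability distributions `μ, ν` whose difference `π = μ − ν` has vanishing
kernel quadratic form `∑_{X,Y} π(X) π(Y) k(X,Y)` (equivalently, equal kernel mean
embeddings / `MMD_k(μ,ν) = 0`) must coincide.  Conversely, if `F` is not injective,
then `k` is not characteristic. -/
theorem embedding_kernel_characteristic_iff_injective
    {S : Type*} [Countable S] [Infinite S] {D : ℕ}
    (F : S → EuclideanSpace ℝ (Fin D))
    (Ψ : EuclideanSpace ℝ (Fin D) → ℝ)
    (hΨpos : ∀ z, 0 < Ψ z)
    (hΨcont : Continuous Ψ)
    (hΨint : MeasureTheory.Integrable Ψ)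
    (hΨfour : ∀ ξ : EuclideanSpace ℝ (Fin D),
      0 < (𝓕 (fun z => (Ψ z : ℂ)) ξ).re ∧ (𝓕 (fun z => (Ψ z : ℂ)) ξ).im = 0)
    (k : S → S → ℝ)
    (hk : ∀ X Y : S, k X Y = Ψ (F X - F Y)) :
    (Function.Injective F →
      ∀ μ ν : S →₀ ℝ, (∀ X, 0 ≤ μ X) → (∀ X, 0 ≤ ν X) →
        (μ.sum fun _ a => a) = 1 → (ν.sum fun _ a => a) = 1 →
        ((μ - ν).sum fun X a => (μ - ν).sum fun Y b => a * b * k X Y) = 0 →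
        μ = ν) ∧
    (¬ Function.Injective F →
      ∃ μ ν : S →₀ ℝ, (∀ X, 0 ≤ μ X) ∧ (∀ X, 0 ≤ ν X) ∧
        (μ.sum fun _ a => a) = 1 ∧ (ν.sum fun _ a => a) = 1 ∧ μ ≠ ν ∧
        ((μ - ν).sum fun X a => (μ - ν).sum fun Y b => a * b * k X Y) = 0) :=
  embedding_kernel_characteristic_iff_injective_general F Ψ hΨcont hΨint hΨfour k hk
end

section
/- Let 𝓑 be a finite alphabet with |𝓑| ≥ 2, S the set of finite strings over 𝓑, and D ∈ ℕ, ε > 0. Let {F̃(X)}_{X∈S} be i.i.d. uniform on the closed unit ball of ℝ^D, and define the scaled embedding F(X) = |𝓑|^{(1+ε)|X|/D} F̃(X). Then almost surely, for every N the set {X ∈ S : ‖F(X)‖ ≤ N} is finite; consequently F(S) has no accumulation points almost surely. -/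
/-!
By scaling, `P(‖F X‖ ≤ N) ≤ N ^ D * |B| ^ (-(1 + ε) |X|)`, and there are `|B| ^ L` strings of
length `L`, so these probabilities are summable and, by Borel–Cantelli, almost surely only
finitely many `F X` lie in each ball. Independent vectors with atomless laws almost surely take
pairwise distinct values, and an injective map with finite sublevel sets of the norm has no
value that is a limit of its other values.
-/

open MeasureTheory ProbabilityTheory Module Metric
open scoped ENNReal

theorem ENNReal.tsum_list_length {α : Type*} [Fintype α] (f : ℕ → ℝ≥0∞) :
    ∑' X : List α, f X.length = ∑' n, (Fintype.card α : ℝ≥0∞) ^ n * f n := by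
  rw [← (List.equivSigmaTuple (α := α)).symm.tsum_eq, ENNReal.tsum_sigma']
  simp [List.equivSigmaTuple, Finset.card_univ]

theorem tsum_ofReal_rpow_neg_length_ne_top {α : Type*} [Fintype α]
    (hα : 1 < Fintype.card α) {s : ℝ} (hs : 1 < s) :
    ∑' X : List α, ENNReal.ofReal ((Fintype.card α : ℝ) ^ (-(s * X.length))) ≠ ∞ := by
  have hc : 1 < (Fintype.card α : ℝ) := by exact_mod_cast hα
  have hterm : ∀ n : ℕ, (Fintype.card α : ℝ≥0∞) ^ n *
      ENNReal.ofReal ((Fintype.card α : ℝ) ^ (-(s * n))) =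
      ENNReal.ofReal ((Fintype.card α : ℝ) ^ (1 - s)) ^ n := by
    intro n
    rw [← ENNReal.ofReal_natCast, ← ENNReal.ofReal_pow (by positivity),
      ← ENNReal.ofReal_mul (by positivity), ← ENNReal.ofReal_pow (by positivity),
      ← Real.rpow_mul_natCast (by positivity), ← Real.rpow_natCast,
      ← Real.rpow_add (by positivity)]
    ring_nf
  rw [ENNReal.tsum_list_length fun n => ENNReal.ofReal ((Fintype.card α : ℝ) ^ (-(s * n))),
    tsum_congr hterm, ← lt_top_iff_ne_top, tsum_geometric_lt_top,
    ← ENNReal.ofReal_one, ENNReal.ofReal_lt_ofReal_iff one_pos]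
  exact Real.rpow_lt_one_of_one_lt_of_neg hc (by linarith)

instance ProbabilityTheory.cond.instNullSingletonClass {Ω : Type*} [MeasurableSpace Ω]
    (μ : Measure Ω) [NullSingletonClass μ] (s : Set Ω) : NullSingletonClass (μ[|s]) :=
  ⟨fun x => by simp [cond]⟩

theorem ProbabilityTheory.IndepFun.ae_ne {Ω β : Type*} [MeasurableSpace Ω] [MeasurableSpace β]
    [MeasurableEq β] {P : Measure Ω} [IsFiniteMeasure P] {f g : Ω → β}
    (hf : AEMeasurable f P) (hg : AEMeasurable g P) (hfg : IndepFun f g P)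
    [NullSingletonClass (P.map g)] : ∀ᵐ ω ∂P, f ω ≠ g ω := by
  have hdiag : P {ω | f ω = g ω} = (P.map f).prod (P.map g) (Set.diagonal β) := by
    rw [← (indepFun_iff_map_prod_eq_prod_map_map hf hg).1 hfg,
      Measure.map_apply_of_aemeasurable (hf.prodMk hg) measurableSet_diagonal]
    rfl
  have hslice : ∀ x, Prod.mk x ⁻¹' Set.diagonal β = {x} := fun x => by ext; simp [eq_comm]
  simp only [ae_iff, not_not, hdiag, Measure.prod_apply measurableSet_diagonal, hslice,
    measure_singleton, lintegral_zero]

section UniformBall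

variable {E : Type*} [NormedAddCommGroup E] [NormedSpace ℝ E] [FiniteDimensional ℝ E]
  [MeasurableSpace E] [BorelSpace E] (μ : Measure E) [μ.IsAddHaarMeasure]

theorem cond_closedBall_one_closedBall_le {r : ℝ} (hr : 0 ≤ r) :
    μ[|closedBall 0 1] (closedBall 0 r) ≤ ENNReal.ofReal (r ^ finrank ℝ E) := by
  have h0 : μ (closedBall 0 1) ≠ 0 := (measure_closedBall_pos μ 0 one_pos).ne'
  have htop : μ (closedBall 0 1) ≠ ∞ := measure_closedBall_lt_top.ne
  calc μ[|closedBall 0 1] (closedBall 0 r) ≤ (μ (closedBall 0 1))⁻¹ * μ (closedBall 0 r) := by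
        rw [cond_apply measurableSet_closedBall]; gcongr; exact Set.inter_subset_right
    _ = ENNReal.ofReal (r ^ finrank ℝ E) := by
        rw [Measure.addHaar_closedBall' μ 0 hr, mul_left_comm, ENNReal.inv_mul_cancel h0 htop,
          mul_one]

theorem measure_norm_smul_le_of_map_eq_cond {Ω : Type*} [MeasurableSpace Ω] {P : Measure Ω}
    {f : Ω → E} (hf : Measurable f) (hlaw : P.map f = μ[|closedBall 0 1]) {a r : ℝ}
    (ha : 0 < a) (hr : 0 ≤ r) :
    P {ω | ‖a • f ω‖ ≤ r} ≤ ENNReal.ofReal ((r / a) ^ finrank ℝ E) := by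
  have hset : {ω | ‖a • f ω‖ ≤ r} = f ⁻¹' closedBall 0 (r / a) := by
    ext ω; simp [norm_smul, abs_of_pos ha, le_div_iff₀ ha, mul_comm]
  rw [hset, ← Measure.map_apply hf measurableSet_closedBall, hlaw]
  exact cond_closedBall_one_closedBall_le μ (div_nonneg hr ha.le)

end UniformBall

theorem ProbabilityTheory.iIndepFun.ae_injective_smul {Ω ι 𝕜 E : Type*} [Countable ι]
    [MeasurableSpace Ω] {P : Measure Ω} [IsProbabilityMeasure P] [DivisionRing 𝕜]
    [AddCommGroup E] [Module 𝕜 E] [MeasurableSpace E] [MeasurableConstSMul 𝕜 E] [MeasurableEq E]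
    {f : ι → Ω → E} (hf : ∀ i, Measurable (f i)) (hindep : iIndepFun f P)
    [∀ i, NullSingletonClass (P.map (f i))] {a : ι → 𝕜} (ha : ∀ i, a i ≠ 0) :
    ∀ᵐ ω ∂P, Function.Injective fun i => a i • f i ω := by
  have hne : ∀ i j, ∀ᵐ ω ∂P, i ≠ j → (a j)⁻¹ • a i • f i ω ≠ f j ω := by
    intro i j
    rcases eq_or_ne i j with rfl | hij
    · exact ae_of_all _ fun _ h => absurd rfl h
    · have hindep_ij := (hindep.indepFun hij).comp (measurable_const_smul ((a j)⁻¹ * a i))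
        measurable_id
      refine (hindep_ij.ae_ne ((hf i).const_smul _).aemeasurable (hf j).aemeasurable).mono
        fun ω h _ => ?_
      simpa [mul_smul] using h
  filter_upwards [ae_all_iff.2 fun i => ae_all_iff.2 (hne i)] with ω hω i j hij
  by_contra h
  exact hω i j h (by simp only at hij; rw [hij, inv_smul_smul₀ (ha j)])

theorem notMem_closure_image_ne_of_finite_norm_le {α E : Type*} [NormedAddCommGroup E]
    {f : α → E} (hf : Function.Injective f) (hfin : ∀ N : ℕ, {x | ‖f x‖ ≤ N}.Finite)
    (x₀ : α) : f x₀ ∉ closure (f '' {x | x ≠ x₀}) := by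
  intro hmem
  obtain ⟨N, hN⟩ := exists_nat_gt ‖f x₀‖
  have hfinite : (ball 0 N ∩ f '' {x | x ≠ x₀}).Finite := by
    refine ((hfin N).image f).subset ?_
    rintro _ ⟨hball, x, -, rfl⟩
    exact ⟨x, (mem_ball_zero_iff.1 hball).le, rfl⟩
  have hmem' : f x₀ ∈ ball 0 N ∩ f '' {x | x ≠ x₀} := by
    rw [← hfinite.isClosed.closure_eq]
    exact isOpen_ball.inter_closure ⟨mem_ball_zero_iff.2 hN, hmem⟩
  obtain ⟨x, hx, hfx⟩ := hmem'.2
  exact hx (hf hfx)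

theorem scaled_random_embedding_no_accumulation_general
    {B : Type*} [Fintype B] (hB : 2 ≤ Fintype.card B)
    {D : ℕ} (hD : 0 < D) (ε : ℝ) (hε : 0 < ε)
    {Ω : Type*} [MeasurableSpace Ω] (P : Measure Ω) [IsProbabilityMeasure P]
    (Ft : List B → Ω → EuclideanSpace ℝ (Fin D))
    (hmeas : ∀ X, Measurable (Ft X))
    (hindep : iIndepFun Ft P)
    (hlaw : ∀ X, P.map (Ft X) =
      (volume (Metric.closedBall (0 : EuclideanSpace ℝ (Fin D)) 1))⁻¹ •
        volume.restrict (Metric.closedBall (0 : EuclideanSpace ℝ (Fin D)) 1))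
    (F : List B → Ω → EuclideanSpace ℝ (Fin D))
    (hF : ∀ (X : List B) (ω : Ω),
      F X ω = ((Fintype.card B : ℝ) ^ ((1 + ε) * (X.length : ℝ) / (D : ℝ))) • Ft X ω) :
    ∀ᵐ ω ∂P,
      (∀ N : ℕ, {X : List B | ‖F X ω‖ ≤ (N : ℝ)}.Finite) ∧
      ∀ X₀ : List B, F X₀ ω ∉ closure ((fun X => F X ω) '' {X : List B | X ≠ X₀}) := by
  have hc : 0 < (Fintype.card B : ℝ) := Nat.cast_pos.2 (by omega)
  have hscale : ∀ X : List B, 0 < (Fintype.card B : ℝ) ^ ((1 + ε) * X.length / D) :=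
    fun X => Real.rpow_pos_of_pos hc _
  have hbound : ∀ (N : ℕ) (X : List B), P {ω | ‖F X ω‖ ≤ N} ≤ ENNReal.ofReal (N ^ D) *
      ENNReal.ofReal ((Fintype.card B : ℝ) ^ (-((1 + ε) * X.length))) := by
    intro N X
    simp only [hF]
    refine (measure_norm_smul_le_of_map_eq_cond volume (hmeas X) (hlaw X) (hscale X)
      N.cast_nonneg).trans_eq ?_
    rw [finrank_euclideanSpace_fin, div_pow, ← Real.rpow_mul_natCast hc.le,
      div_mul_cancel₀ _ (by positivity), Real.rpow_neg hc.le, div_eq_mul_inv,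
      ENNReal.ofReal_mul (by positivity)]
  have hfin : ∀ N : ℕ, ∀ᵐ ω ∂P, {X : List B | ‖F X ω‖ ≤ N}.Finite := fun N =>
    ae_finite_setOfPred_mem <| ne_top_of_le_ne_top
      (by
        rw [ENNReal.tsum_mul_left]
        exact ENNReal.mul_ne_top ENNReal.ofReal_ne_top
          (tsum_ofReal_rpow_neg_length_ne_top hB (by linarith)))
      (ENNReal.tsum_le_tsum (hbound N))
  have : Nonempty (Fin D) := ⟨⟨0, hD⟩⟩
  have : ∀ X, NullSingletonClass (P.map (Ft X)) := fun X => by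
    rw [hlaw X]; exact cond.instNullSingletonClass volume _
  filter_upwards [ae_all_iff.2 hfin, hindep.ae_injective_smul hmeas fun X => (hscale X).ne']
    with ω hfinω hinjω
  refine ⟨hfinω, notMem_closure_image_ne_of_finite_norm_le ?_ hfinω⟩
  simpa only [hF] using hinjω

/-- **Scaled random embeddings have no accumulation points.**
Let `𝓑` be a finite alphabet with `|𝓑| ≥ 2`, `S = List 𝓑` the set of finite strings,
`D ≥ 1`, `ε > 0`, and let `{F̃ X}_{X ∈ S}` be i.i.d. uniform on the closed unit ball of
`ℝ^D`.  Define the scaled embedding `F X = |𝓑|^{(1+ε)|X|/D} • F̃ X`.  Then almost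
surely, for every `N` the set `{X : ‖F X‖ ≤ N}` is finite, and consequently the image
of `F` has no accumulation points: no `F X₀` lies in the closure of `F '' (S \ {X₀})`. -/
theorem scaled_random_embedding_no_accumulation
    {B : Type*} [Fintype B] [DecidableEq B] (hB : 2 ≤ Fintype.card B)
    {D : ℕ} (hD : 0 < D) (ε : ℝ) (hε : 0 < ε)
    {Ω : Type*} [MeasurableSpace Ω] (P : Measure Ω) [IsProbabilityMeasure P]
    (Ft : List B → Ω → EuclideanSpace ℝ (Fin D))
    (hmeas : ∀ X, Measurable (Ft X))
    (hindep : iIndepFun Ft P)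
    (hlaw : ∀ X, P.map (Ft X) =
      (volume (Metric.closedBall (0 : EuclideanSpace ℝ (Fin D)) 1))⁻¹ •
        volume.restrict (Metric.closedBall (0 : EuclideanSpace ℝ (Fin D)) 1))
    (F : List B → Ω → EuclideanSpace ℝ (Fin D))
    (hF : ∀ (X : List B) (ω : Ω),
      F X ω = ((Fintype.card B : ℝ) ^ ((1 + ε) * (X.length : ℝ) / (D : ℝ))) • Ft X ω) :
    ∀ᵐ ω ∂P,
      (∀ N : ℕ, {X : List B | ‖F X ω‖ ≤ (N : ℝ)}.Finite) ∧
      ∀ X₀ : List B, F X₀ ω ∉ closure ((fun X => F X ω) '' {X : List B | X ≠ X₀}) :=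
  scaled_random_embedding_no_accumulation_general hB hD ε hε P Ft hmeas hindep hlaw F hF
end
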